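/- arXiv:2510.17365 — 10 statements merged into one kernel-verified Lean document; each statement's English description precedes it below -/
import Mathlib

section
/- Let W be an irreducible transition rate matrix on the finite state space {1, …, L}. Then 0 is an eigenvalue of W of algebraic multiplicity one, i.e., 0 is a simple root of the characteristic polynomial of W. -/
/-- `W` is a transition rate matrix: nonnegative off-diagonal entries and
every column sums to zero. -/
def IsTransitionRateMatrix {L : ℕ} (W : Matrix (Fin L) (Fin L) ℝ) : Prop :=
  (∀ n n' : Fin L, n ≠ n' → 0 ≤ W n n') ∧ (∀ n' : Fin L, ∑ n, W n n' = 0)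

/-- `W` is irreducible: any two distinct states are connected by a path of
strictly positive transition rates. -/
def IsIrreducibleRateMatrix {L : ℕ} (W : Matrix (Fin L) (Fin L) ℝ) : Prop :=
  ∀ n₀ n₁ : Fin L, n₀ ≠ n₁ → ∃ (l : ℕ) (m : Fin (l + 1) → Fin L),
    m 0 = n₀ ∧ m (Fin.last l) = n₁ ∧ ∀ i : Fin l, 0 < W (m i.succ) (m i.castSucc)

/-!
Since the columns of `W` sum to zero, every column of `X - W` sums to `X`; adding all rows of
`X - W` to row `i` and factoring out `X` gives `charpoly W = X * q` with `q(0) = det B`, where `B`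
is `-W` with row `i` replaced by ones. If `v ᵥ* B = 0`, then `z := v` with `z i := 0` satisfies
`z ᵥ* W = v i` everywhere. As `(z ᵥ* W) j = ∑ₖ (z k - z j) W k j` is `≤ 0` at a maximum of `z`
and `≥ 0` at a minimum, `v i = 0`. Then all terms vanish at a maximum, so a maximum of `z` passes
to every state reached with positive rate; by irreducibility `z` is constant, and `z i = 0`
gives `v = 0`.
-/

open Matrix Polynomial

namespace Polynomial

theorem rootMultiplicity_X_mul_of_eval_ne_zero {R : Type*} [CommRing R] {q : R[X]}
    (hq : q.eval 0 ≠ 0) : (X * q).rootMultiplicity 0 = 1 := by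
  have hq0 : q ≠ 0 := by rintro rfl; simp at hq
  have := rootMultiplicity_mul_X_sub_C_pow (a := (0 : R)) (n := 1) hq0
  rwa [map_zero, sub_zero, pow_one, rootMultiplicity_eq_zero hq, zero_add, mul_comm] at this

end Polynomial

namespace Matrix

section Semiring

variable {R n : Type*} [Semiring R] [Fintype n] [DecidableEq n]

theorem vecMul_updateRow (v : n → R) (M : Matrix n n R) (i : n) (b : n → R) :
    v ᵥ* updateRow M i b = Function.update v i 0 ᵥ* M + v i • b := by
  ext j
  simp only [vecMul, dotProduct, updateRow_apply, Pi.add_apply, Pi.smul_apply, smul_eq_mul]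
  rw [← Finset.add_sum_erase _ _ (Finset.mem_univ i),
    ← Finset.add_sum_erase _ _ (Finset.mem_univ i)]
  simp only [if_pos, Function.update_self, zero_mul, zero_add]
  rw [add_comm]
  congr 1
  refine Finset.sum_congr rfl fun k hk => ?_
  rw [if_neg (Finset.ne_of_mem_erase hk), Function.update_of_ne (Finset.ne_of_mem_erase hk)]

end Semiring

section CommRing

variable {R n : Type*} [CommRing R] [Fintype n] [DecidableEq n]

theorem sum_charmatrix_apply_of_sum_eq_zero {M : Matrix n n R} (hM : ∀ j, ∑ i, M i j = 0)
    (j : n) : ∑ i, charmatrix M i j = X := by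
  simp only [charmatrix_apply, Finset.sum_sub_distrib, ← map_sum, hM, map_zero, sub_zero]
  simp [diagonal_apply]

theorem charpoly_eq_X_mul_det_updateRow_one {M : Matrix n n R} (hM : ∀ j, ∑ i, M i j = 0)
    (i : n) : M.charpoly = X * (updateRow (charmatrix M) i 1).det := by
  have hsum : ∑ k, (1 : R[X]) • charmatrix M k = (X : R[X]) • (1 : n → R[X]) := by
    funext j
    simp only [one_smul, Pi.smul_apply, Pi.one_apply, smul_eq_mul, mul_one]
    exact (Finset.sum_apply j _ _).trans (sum_charmatrix_apply_of_sum_eq_zero hM j)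
  rw [← det_updateRow_smul, ← hsum, det_updateRow_sum, one_smul, charpoly]

theorem eval_zero_det_updateRow_charmatrix (M : Matrix n n R) (i : n) :
    (updateRow (charmatrix M) i 1).det.eval 0 = (updateRow (-M) i 1).det := by
  have hmap : (charmatrix M).map (eval 0) = -M := by
    ext j k
    obtain rfl | hjk := eq_or_ne j k <;> simp [*]
  rw [← coe_evalRingHom, RingHom.map_det, RingHom.mapMatrix_apply, coe_evalRingHom,
    map_updateRow, hmap]
  congr
  ext
  simp

end CommRing

end Matrix

namespace IsTransitionRateMatrix

variable {L : ℕ} {W : Matrix (Fin L) (Fin L) ℝ}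

theorem vecMul_apply_eq_sum_sub (hW : IsTransitionRateMatrix W) (z : Fin L → ℝ) (j : Fin L) :
    (z ᵥ* W) j = ∑ k, (z k - z j) * W k j := by
  simp only [vecMul, dotProduct, sub_mul, Finset.sum_sub_distrib, ← Finset.mul_sum, hW.2 j,
    mul_zero, sub_zero]

theorem sub_mul_nonpos_of_le (hW : IsTransitionRateMatrix W) {z : Fin L → ℝ} {j : Fin L}
    (hmax : ∀ k, z k ≤ z j) (k : Fin L) : (z k - z j) * W k j ≤ 0 := by
  obtain rfl | hkj := eq_or_ne k j
  · simp
  · exact mul_nonpos_of_nonpos_of_nonneg (sub_nonpos.2 (hmax k)) (hW.1 k j hkj)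

theorem vecMul_apply_nonpos_of_le (hW : IsTransitionRateMatrix W) {z : Fin L → ℝ} {j : Fin L}
    (hmax : ∀ k, z k ≤ z j) : (z ᵥ* W) j ≤ 0 := by
  rw [hW.vecMul_apply_eq_sum_sub]
  exact Finset.sum_nonpos fun m _ => hW.sub_mul_nonpos_of_le hmax m

theorem eq_of_vecMul_apply_eq_zero_of_le (hW : IsTransitionRateMatrix W) {z : Fin L → ℝ}
    {j k : Fin L} (hmax : ∀ k, z k ≤ z j) (hz : (z ᵥ* W) j = 0) (hkj : 0 < W k j) :
    z k = z j := by
  rw [hW.vecMul_apply_eq_sum_sub,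
    Finset.sum_eq_zero_iff_of_nonpos fun m _ => hW.sub_mul_nonpos_of_le hmax m] at hz
  simpa [hkj.ne', sub_eq_zero] using hz k (Finset.mem_univ k)

theorem eq_zero_of_vecMul_eq_const (hW : IsTransitionRateMatrix W) [NeZero L] {z : Fin L → ℝ}
    {c : ℝ} (hz : z ᵥ* W = fun _ => c) : c = 0 := by
  obtain ⟨jmax, hjmax⟩ := Finite.exists_max z
  obtain ⟨jmin, hjmin⟩ := Finite.exists_max (-z)
  have hc_nonpos : c ≤ 0 := congrFun hz jmax ▸ hW.vecMul_apply_nonpos_of_le hjmax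
  have hc_nonneg : -c ≤ 0 := by
    have := hW.vecMul_apply_nonpos_of_le hjmin
    rwa [neg_vecMul, hz] at this
  linarith

theorem eq_of_vecMul_eq_zero (hW : IsTransitionRateMatrix W) (hirr : IsIrreducibleRateMatrix W)
    {z : Fin L → ℝ} (hz : z ᵥ* W = 0) (k k' : Fin L) : z k = z k' := by
  have : Nonempty (Fin L) := ⟨k⟩
  obtain ⟨j, hj⟩ := Finite.exists_max z
  suffices hconst : ∀ k, z k = z j by rw [hconst k, hconst k']
  intro k
  obtain rfl | hne := eq_or_ne j k
  · rfl
  obtain ⟨l, m, hm0, hml, hpath⟩ := hirr j k hne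
  have hpath_max : ∀ i, z (m i) = z j := by
    intro i
    induction i using Fin.induction with
    | zero => rw [hm0]
    | succ i ih =>
      have hmax : ∀ s, z s ≤ z (m i.castSucc) := fun s => ih ▸ hj s
      exact (hW.eq_of_vecMul_apply_eq_zero_of_le hmax (congrFun hz _) (hpath i)).trans ih
  simpa [hml] using hpath_max (Fin.last l)

theorem det_updateRow_neg_ne_zero (hW : IsTransitionRateMatrix W)
    (hirr : IsIrreducibleRateMatrix W) (i : Fin L) : (updateRow (-W) i 1).det ≠ 0 := by
  have : NeZero L := NeZero.of_pos i.pos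
  intro hdet
  obtain ⟨v, hv0, hv⟩ := exists_vecMul_eq_zero_iff.2 hdet
  set z := Function.update v i 0
  have hzW : z ᵥ* W = fun _ => v i := by
    rw [vecMul_updateRow, vecMul_neg] at hv
    funext j
    have := congrFun hv j
    simp only [Pi.add_apply, Pi.neg_apply, Pi.smul_apply, Pi.one_apply, smul_eq_mul, mul_one,
      Pi.zero_apply] at this
    linarith
  have hvi : v i = 0 := hW.eq_zero_of_vecMul_eq_const hzW
  have hz : z = 0 := funext fun k =>
    (hW.eq_of_vecMul_eq_zero hirr (hzW.trans (funext fun _ => hvi)) k i).trans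
      (Function.update_self ..)
  apply hv0
  rw [← Function.update_eq_self i v, hvi]
  exact hz

end IsTransitionRateMatrix

/-- For an irreducible transition rate matrix `W` on a finite state space,
`0` is an eigenvalue of `W` of algebraic multiplicity one, i.e. a simple root
of the characteristic polynomial of `W`. -/
theorem zero_simple_root_charpoly_of_irreducible_rate_matrix
    {L : ℕ} (hL : 0 < L) (W : Matrix (Fin L) (Fin L) ℝ)
    (hW : IsTransitionRateMatrix W) (hirr : IsIrreducibleRateMatrix W) :
    (Matrix.charpoly W).rootMultiplicity 0 = 1 := by
  let i : Fin L := ⟨0, hL⟩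
  rw [charpoly_eq_X_mul_det_updateRow_one hW.2 i]
  apply rootMultiplicity_X_mul_of_eval_ne_zero
  rw [eval_zero_det_updateRow_charmatrix]
  exact hW.det_updateRow_neg_ne_zero hirr i
end

section
/- Let W be an irreducible transition rate matrix on the finite state space {1, …, L}. Then there exists a unique probability vector P^{ss} (P^{ss}_n ≥ 0, Σ_n P^{ss}_n = 1) with W P^{ss} = 0; moreover P^{ss}_n > 0 for every n, and for every probability vector P⁰ the solution P(t) = exp(tW) P⁰ of the master equation dP/dt = W P with P(0) = P⁰ satisfies lim_{t→∞} P(t) = P^{ss}. -/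
/-!
`exp W` is a column-stochastic matrix, and irreducibility makes all of its entries positive
(shift `W` by a multiple of the identity to make it nonnegative, then every path of positive
rates contributes a positive term to the exponential series). A positive stochastic matrix
contracts the ℓ¹ norm of zero-sum vectors by the factor `1 - L δ < 1`, `δ` its least entry. So
its iterates on a probability vector form a Cauchy sequence whose limit is the unique
stationary probability vector `p`, which is positive; `exp (t • W)` commutes with `exp W`, hence
fixes `p`, and differentiating at `t = 0` gives `W p = 0`. Finally `exp (t • W) (P⁰ - p)` is
contracted `⌊t⌋` times and expanded never, so it tends to zero.
-/

open Filter

open Topology Matrix NormedSpace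

theorem pi_norm_le_sum_abs {ι : Type*} [Fintype ι] (x : ι → ℝ) : ‖x‖ ≤ ∑ i, |x i| :=
  (pi_norm_le_iff_of_nonneg (by positivity)).2 fun i =>
    (Real.norm_eq_abs _).trans_le (Finset.single_le_sum (fun j _ => abs_nonneg (x j))
      (Finset.mem_univ i))

namespace Matrix

theorem pow_apply_pos_of_path {ι R : Type*} [Fintype ι] [DecidableEq ι] [Semiring R]
    [PartialOrder R] [IsStrictOrderedRing R] {B : Matrix ι ι R} (hB : ∀ i j, 0 ≤ B i j)
    {l : ℕ} (m : Fin (l + 1) → ι) (hm : ∀ k : Fin l, 0 < B (m k.succ) (m k.castSucc)) :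
    0 < (B ^ l) (m (Fin.last l)) (m 0) := by
  induction l with
  | zero => simp [Fin.last]
  | succ l ih =>
    have := ih (m ∘ Fin.castSucc) fun k => by simpa using hm k.castSucc
    rw [pow_succ', mul_apply]
    refine Finset.sum_pos' (fun z _ => mul_nonneg (hB _ _) (pow_apply_nonneg hB _ _ _))
      ⟨_, Finset.mem_univ _, mul_pos (hm (Fin.last l)) ?_⟩
    simpa using this

section Stochastic

variable {ι : Type*} [Fintype ι] {M : Matrix ι ι ℝ}

theorem sum_abs_mulVec_le_of_le_apply {δ : ℝ} (hδ : ∀ i j, δ ≤ M i j)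
    (hM : ∀ j, ∑ i, M i j = 1) {x : ι → ℝ} (hx : ∑ j, x j = 0) :
    ∑ i, |(M *ᵥ x) i| ≤ (1 - Fintype.card ι * δ) * ∑ j, |x j| := by
  -- since `∑ x = 0`, subtracting `δ` from every entry of `M` does not change `M *ᵥ x`
  have hMx (i : ι) : (M *ᵥ x) i = ∑ j, (M i j - δ) * x j := by
    simp [mulVec, dotProduct, sub_mul, Finset.sum_sub_distrib, ← Finset.mul_sum, hx]
  calc ∑ i, |(M *ᵥ x) i| ≤ ∑ i, ∑ j, (M i j - δ) * |x j| := by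
        gcongr with i
        rw [hMx]
        refine (Finset.abs_sum_le_sum_abs _ _).trans_eq (Finset.sum_congr rfl fun j _ => ?_)
        rw [abs_mul, abs_of_nonneg (sub_nonneg.2 (hδ i j))]
    _ = (1 - Fintype.card ι * δ) * ∑ j, |x j| := by
        rw [Finset.sum_comm, Finset.mul_sum]
        refine Finset.sum_congr rfl fun j _ => ?_
        simp [← Finset.sum_mul, Finset.sum_sub_distrib, hM j]

theorem pos_of_mulVec_eq_self (hpos : ∀ i j, 0 < M i j) {p : ι → ℝ}
    (hp0 : ∀ i, 0 ≤ p i) (hp1 : 0 < ∑ i, p i) (hp : M *ᵥ p = p) (i : ι) : 0 < p i := by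
  obtain ⟨j, -, hj⟩ :=
    Finset.exists_lt_of_sum_lt (by simpa using hp1 : ∑ _ : ι, (0 : ℝ) < ∑ i, p i)
  rw [← hp]
  exact Finset.sum_pos' (fun j _ => mul_nonneg (hpos i j).le (hp0 j))
    ⟨j, Finset.mem_univ j, mul_pos (hpos i j) hj⟩

variable [DecidableEq ι]

theorem sum_abs_mulVec_le_of_mem_colStochastic (hM : M ∈ colStochastic ℝ ι) {x : ι → ℝ}
    (hx : ∑ j, x j = 0) : ∑ i, |(M *ᵥ x) i| ≤ ∑ j, |x j| := by
  simpa using sum_abs_mulVec_le_of_le_apply (fun i j => hM.1 i j)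
    (sum_col_of_mem_colStochastic hM) hx

theorem exists_sum_abs_pow_mulVec_le_of_pos [Nonempty ι] (hM : M ∈ colStochastic ℝ ι)
    (hpos : ∀ i j, 0 < M i j) :
    ∃ c : ℝ, 0 ≤ c ∧ c < 1 ∧ ∀ (k : ℕ) (x : ι → ℝ), ∑ i, x i = 0 →
      ∑ i, |(M ^ k *ᵥ x) i| ≤ c ^ k * ∑ i, |x i| := by
  obtain ⟨⟨i₀, j₀⟩, hmin⟩ := Finite.exists_min fun p : ι × ι => M p.1 p.2
  set c := 1 - Fintype.card ι * M i₀ j₀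
  have hc0 : 0 ≤ c := by
    have : ∑ i, M i₀ j₀ ≤ ∑ i, M i j₀ := Finset.sum_le_sum fun i _ => hmin (i, j₀)
    simpa [c, sum_col_of_mem_colStochastic hM] using this
  have hc1 : c < 1 := by
    have := mul_pos (Nat.cast_pos.2 (Fintype.card_pos (α := ι))) (hpos i₀ j₀)
    linarith
  refine ⟨c, hc0, hc1, fun k x hx => ?_⟩
  induction k with
  | zero => simp
  | succ k ih =>
    rw [pow_succ' M k, ← mulVec_mulVec, pow_succ', mul_assoc]
    calc _ ≤ c * ∑ i, |(M ^ k *ᵥ x) i| :=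
          sum_abs_mulVec_le_of_le_apply (fun i j => hmin (i, j))
            (sum_col_of_mem_colStochastic hM)
            (by rw [sum_mulVec_of_mem_colStochastic (pow_mem hM k), hx])
      _ ≤ c * (c ^ k * ∑ i, |x i|) := by gcongr

theorem exists_mulVec_eq_self_of_pos [Nonempty ι] (hM : M ∈ colStochastic ℝ ι)
    (hpos : ∀ i j, 0 < M i j) : ∃ p : ι → ℝ, (∀ i, 0 ≤ p i) ∧ ∑ i, p i = 1 ∧ M *ᵥ p = p := by
  obtain ⟨c, -, hc1, hc⟩ := exists_sum_abs_pow_mulVec_le_of_pos hM hpos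
  obtain ⟨i₀⟩ := ‹Nonempty ι›
  set e : ι → ℝ := Pi.single i₀ 1
  set u : ℕ → ι → ℝ := fun k => M ^ k *ᵥ e
  have hu_succ (k : ℕ) : u (k + 1) = M *ᵥ u k := by simp [u, pow_succ', mulVec_mulVec]
  have hu_nonneg (k : ℕ) (i : ι) : 0 ≤ u k i :=
    nonneg_mulVec_of_mem_colStochastic (pow_mem hM k) (Pi.single_nonneg.2 zero_le_one : 0 ≤ e) i
  have hu_sum (k : ℕ) : ∑ i, u k i = 1 := by
    simp only [u, sum_mulVec_of_mem_colStochastic (pow_mem hM k)]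
    simp [e]
  have hu_dist (k : ℕ) : dist (u k) (u (k + 1)) ≤ (∑ i, |(e - M *ᵥ e) i|) * c ^ k := by
    have : u k - u (k + 1) = M ^ k *ᵥ (e - M *ᵥ e) := by
      simp [u, mulVec_sub, pow_succ, mulVec_mulVec]
    rw [dist_eq_norm, this, mul_comm]
    refine (pi_norm_le_sum_abs _).trans (hc k _ ?_)
    simp [Finset.sum_sub_distrib, sum_mulVec_of_mem_colStochastic hM]
  obtain ⟨p, hp⟩ := cauchySeq_tendsto_of_complete (cauchySeq_of_le_geometric c _ hc1 hu_dist)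
  refine ⟨p, fun i => ?_, ?_, ?_⟩
  · exact ge_of_tendsto' (((continuous_apply i).tendsto p).comp hp) fun k => hu_nonneg k i
  · refine tendsto_nhds_unique
      (((continuous_finsetSum _ fun i _ => continuous_apply i).tendsto p).comp hp) ?_
    simp [Function.comp_def, hu_sum]
  · refine tendsto_nhds_unique ?_ ((tendsto_add_atTop_iff_nat 1).2 hp)
    simpa [Function.comp_def, hu_succ] using
      ((continuous_const.matrix_mulVec continuous_id).tendsto p).comp hp

theorem eq_of_mulVec_eq_self_of_pos [Nonempty ι] (hM : M ∈ colStochastic ℝ ι)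
    (hpos : ∀ i j, 0 < M i j) {p q : ι → ℝ} (hsum : ∑ i, p i = ∑ i, q i)
    (hp : M *ᵥ p = p) (hq : M *ᵥ q = q) : p = q := by
  obtain ⟨c, -, hc1, hc⟩ := exists_sum_abs_pow_mulVec_le_of_pos hM hpos
  have hle := hc 1 (p - q) (by simp [Finset.sum_sub_distrib, hsum])
  rw [pow_one, mulVec_sub, hp, hq] at hle
  have hzero : ∑ i, |(p - q) i| = 0 := by
    have := Finset.sum_nonneg fun i (_ : i ∈ Finset.univ) => abs_nonneg ((p - q) i)
    nlinarith
  funext i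
  have := (Finset.sum_eq_zero_iff_of_nonneg fun i _ => abs_nonneg _).1 hzero i (Finset.mem_univ i)
  simpa [sub_eq_zero] using this

theorem exists_unique_mulVec_eq_self_of_pos [Nonempty ι] (hM : M ∈ colStochastic ℝ ι)
    (hpos : ∀ i j, 0 < M i j) :
    ∃ p : ι → ℝ, (∀ i, 0 < p i) ∧ ∑ i, p i = 1 ∧ M *ᵥ p = p ∧
      ∀ q : ι → ℝ, ∑ i, q i = 1 → M *ᵥ q = q → q = p := by
  obtain ⟨p, hp0, hp1, hp⟩ := exists_mulVec_eq_self_of_pos hM hpos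
  exact ⟨p, pos_of_mulVec_eq_self hpos hp0 (hp1 ▸ one_pos) hp, hp1, hp,
    fun q hq hMq => eq_of_mulVec_eq_self_of_pos hM hpos (hq.trans hp1.symm) hMq hp⟩

end Stochastic

section Exponential

variable {ι : Type*} [Fintype ι] [DecidableEq ι]

theorem hasSum_exp_apply (A : Matrix ι ι ℝ) (i j : ι) :
    HasSum (fun k : ℕ => (k.factorial : ℝ)⁻¹ * (A ^ k) i j) (exp A i j) := by
  let _ : NormedRing (Matrix ι ι ℝ) := Matrix.linftyOpNormedRing
  let _ : NormedAlgebra ℝ (Matrix ι ι ℝ) := Matrix.linftyOpNormedAlgebra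
  exact Pi.hasSum.mp (Pi.hasSum.mp (exp_series_hasSum_exp' (𝕂 := ℝ) A) i) j

theorem exp_apply_nonneg {B : Matrix ι ι ℝ} (hB : ∀ i j, 0 ≤ B i j) (i j : ι) :
    0 ≤ exp B i j :=
  (hasSum_exp_apply B i j).nonneg fun k => mul_nonneg (by positivity) (pow_apply_nonneg hB k i j)

theorem exp_apply_pos_of_pow_apply_pos {B : Matrix ι ι ℝ} (hB : ∀ i j, 0 ≤ B i j) {k : ℕ}
    {i j : ι} (h : 0 < (B ^ k) i j) : 0 < exp B i j :=
  (mul_pos (by positivity) h).trans_le <| le_hasSum (hasSum_exp_apply B i j) k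
    fun n _ => mul_nonneg (by positivity) (pow_apply_nonneg hB n i j)

theorem exp_add_smul_one (A : Matrix ι ι ℝ) (c : ℝ) :
    exp (A + c • 1) = Real.exp c • exp A := by
  rw [exp_add_of_commute _ _ ((Commute.one_right A).smul_right c), smul_one_eq_diagonal,
    exp_diagonal, Pi.exp_def, ← Real.exp_eq_exp_ℝ, ← smul_one_eq_diagonal, mul_smul_comm,
    mul_one]

theorem exp_add_smul (A : Matrix ι ι ℝ) (s t : ℝ) :
    exp ((s + t) • A) = exp (s • A) * exp (t • A) := by
  rw [add_smul, exp_add_of_commute _ _ (((Commute.refl A).smul_left s).smul_right t)]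

theorem commute_exp_smul (A : Matrix ι ι ℝ) (s t : ℝ) : Commute (exp (s • A)) (exp (t • A)) := by
  rw [Commute, SemiconjBy, ← exp_add_smul, ← exp_add_smul, add_comm]

theorem hasDerivAt_exp_smul_mulVec (A : Matrix ι ι ℝ) (v : ι → ℝ) (t : ℝ) :
    HasDerivAt (fun s : ℝ => exp (s • A) *ᵥ v) (exp (t • A) *ᵥ (A *ᵥ v)) t := by
  let _ : NormedRing (Matrix ι ι ℝ) := Matrix.linftyOpNormedRing
  let _ : NormedAlgebra ℝ (Matrix ι ι ℝ) := Matrix.linftyOpNormedAlgebra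
  rw [mulVec_mulVec]
  exact (LinearMap.toContinuousLinearMap ((LinearMap.applyₗ v).comp toLin'.toLinearMap))
    |>.hasFDerivAt.comp_hasDerivAt t (hasDerivAt_exp_smul_const A t)

theorem exp_smul_mulVec_of_mulVec_eq_zero {A : Matrix ι ι ℝ} {v : ι → ℝ} (h : A *ᵥ v = 0)
    (t : ℝ) : exp (t • A) *ᵥ v = v := by
  have hd (s : ℝ) : HasDerivAt (fun s : ℝ => exp (s • A) *ᵥ v) 0 s := by
    simpa [h] using hasDerivAt_exp_smul_mulVec A v s
  simpa using is_const_of_deriv_eq_zero (fun s => (hd s).differentiableAt)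
    (fun s => (hd s).deriv) t 0

theorem mulVec_eq_zero_of_forall_exp_smul_mulVec_eq {A : Matrix ι ι ℝ} {v : ι → ℝ}
    (h : ∀ t : ℝ, 0 ≤ t → exp (t • A) *ᵥ v = v) : A *ᵥ v = 0 := by
  have hd := (hasDerivAt_exp_smul_mulVec A v 0).hasDerivWithinAt (s := Set.Ici 0)
  have hc : HasDerivWithinAt (fun s : ℝ => exp (s • A) *ᵥ v) 0 (Set.Ici 0) 0 :=
    (hasDerivWithinAt_const _ _ v).congr (fun s hs => h s hs) (h 0 le_rfl)
  simpa using (uniqueDiffWithinAt_Ici 0).eq_deriv _ hd hc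

end Exponential

section RateMatrix

variable {ι : Type*} [Fintype ι] [DecidableEq ι] {Q : Matrix ι ι ℝ}

theorem exists_nonneg_add_smul_one (hQ : ∀ i j, i ≠ j → 0 ≤ Q i j) :
    ∃ c : ℝ, 0 ≤ c ∧ ∀ i j, 0 ≤ (Q + c • 1) i j := by
  refine ⟨∑ k, |Q k k|, by positivity, fun i j => ?_⟩
  rcases eq_or_ne i j with rfl | hij
  · have := Finset.single_le_sum (fun k _ => abs_nonneg (Q k k)) (Finset.mem_univ i)
    simp only [add_apply, smul_apply, one_apply_eq, smul_eq_mul, mul_one]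
    linarith [neg_abs_le (Q i i)]
  · simpa [hij] using hQ i j hij

theorem exp_apply_nonneg_of_offDiag_nonneg (hQ : ∀ i j, i ≠ j → 0 ≤ Q i j) (i j : ι) :
    0 ≤ exp Q i j := by
  obtain ⟨c, -, hc⟩ := exists_nonneg_add_smul_one hQ
  have := exp_apply_nonneg hc i j
  rw [exp_add_smul_one, smul_apply, smul_eq_mul] at this
  exact (mul_nonneg_iff_of_pos_left (Real.exp_pos c)).1 this

theorem exp_smul_mem_colStochastic (hoff : ∀ i j, i ≠ j → 0 ≤ Q i j)
    (hcol : ∀ j, ∑ i, Q i j = 0) {t : ℝ} (ht : 0 ≤ t) : exp (t • Q) ∈ colStochastic ℝ ι := by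
  refine ⟨exp_apply_nonneg_of_offDiag_nonneg fun i j hij => mul_nonneg ht (hoff i j hij), ?_⟩
  have hQ1 : Qᵀ *ᵥ 1 = 0 := by
    funext j
    simp [mulVec, dotProduct, hcol]
  rw [← mulVec_transpose, ← exp_transpose, transpose_smul]
  exact exp_smul_mulVec_of_mulVec_eq_zero hQ1 t

theorem tendsto_exp_smul_mulVec_nhds_zero [Nonempty ι] (hoff : ∀ i j, i ≠ j → 0 ≤ Q i j)
    (hcol : ∀ j, ∑ i, Q i j = 0) (hpos : ∀ i j, 0 < exp Q i j) {x : ι → ℝ}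
    (hx : ∑ i, x i = 0) : Tendsto (fun t : ℝ => exp (t • Q) *ᵥ x) atTop (𝓝 0) := by
  obtain ⟨c, hc0, hc1, hc⟩ := exists_sum_abs_pow_mulVec_le_of_pos
    (by simpa using exp_smul_mem_colStochastic hoff hcol zero_le_one) hpos
  -- `exp (t • Q) = (exp Q) ^ ⌊t⌋ * exp ((t - ⌊t⌋) • Q)`: the first factor contracts and the
  -- second does not expand
  have hbound (t : ℝ) (ht : 0 ≤ t) : ‖exp (t • Q) *ᵥ x‖ ≤ c ^ ⌊t⌋₊ * ∑ i, |x i| := by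
    set k := ⌊t⌋₊
    have hS := exp_smul_mem_colStochastic hoff hcol (sub_nonneg.2 (Nat.floor_le ht))
    have hsplit : exp (t • Q) = exp Q ^ k * exp ((t - k) • Q) := by
      rw [← exp_nsmul, ← Nat.cast_smul_eq_nsmul ℝ, ← exp_add_smul, add_sub_cancel]
    calc ‖exp (t • Q) *ᵥ x‖ ≤ ∑ i, |(exp (t • Q) *ᵥ x) i| := pi_norm_le_sum_abs _
      _ = ∑ i, |(exp Q ^ k *ᵥ (exp ((t - k) • Q) *ᵥ x)) i| := by rw [hsplit, mulVec_mulVec]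
      _ ≤ c ^ k * ∑ i, |(exp ((t - k) • Q) *ᵥ x) i| :=
          hc k _ (by rw [sum_mulVec_of_mem_colStochastic hS, hx])
      _ ≤ c ^ k * ∑ i, |x i| :=
          mul_le_mul_of_nonneg_left (sum_abs_mulVec_le_of_mem_colStochastic hS hx)
            (pow_nonneg hc0 k)
  refine squeeze_zero_norm' (a := fun t => c ^ ⌊t⌋₊ * ∑ i, |x i|)
    (by filter_upwards [eventually_ge_atTop 0] with t ht using hbound t ht) ?_
  simpa using ((tendsto_pow_atTop_nhds_zero_of_lt_one hc0 hc1).comp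
    tendsto_nat_floor_atTop).mul_const (∑ i, |x i|)

end RateMatrix

theorem exp_apply_pos_of_isIrreducibleRateMatrix {L : ℕ} {W : Matrix (Fin L) (Fin L) ℝ}
    (hoff : ∀ i j, i ≠ j → 0 ≤ W i j) (hirr : IsIrreducibleRateMatrix W) (i j : Fin L) :
    0 < exp W i j := by
  obtain ⟨c, hc0, hc⟩ := exists_nonneg_add_smul_one hoff
  have hle (a b : Fin L) : W a b ≤ (W + c • 1) a b := by
    rcases eq_or_ne a b with rfl | hab <;> simp [*]
  obtain ⟨k, hk⟩ : ∃ k : ℕ, 0 < ((W + c • 1) ^ k) i j := by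
    rcases eq_or_ne j i with rfl | hji
    · exact ⟨0, by simp⟩
    obtain ⟨l, m, rfl, rfl, hm⟩ := hirr j i hji
    exact ⟨l, pow_apply_pos_of_path hc m fun k => (hm k).trans_le (hle _ _)⟩
  have := exp_apply_pos_of_pow_apply_pos hc hk
  rw [exp_add_smul_one, smul_apply, smul_eq_mul] at this
  exact pos_of_mul_pos_right this (Real.exp_pos c).le

end Matrix

/-- **Uniqueness and global attractivity of the nonequilibrium steady state.**
An irreducible transition rate matrix `W` has a unique stationary probability
vector `Pss` (`W Pss = 0`), which has strictly positive entries, and every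
solution `P(t) = exp(tW) P⁰` of the master equation starting from a probability
vector `P⁰` converges to `Pss` as `t → ∞`. -/
theorem exists_unique_stationary_distribution_of_irreducible_rate_matrix
    {L : ℕ} (hL : 0 < L) (W : Matrix (Fin L) (Fin L) ℝ)
    (hW : IsTransitionRateMatrix W) (hirr : IsIrreducibleRateMatrix W) :
    ∃ Pss : Fin L → ℝ,
      (∀ n, 0 < Pss n) ∧ (∑ n, Pss n = 1) ∧ W.mulVec Pss = 0 ∧
      (∀ Q : Fin L → ℝ, (∀ n, 0 ≤ Q n) → (∑ n, Q n = 1) → W.mulVec Q = 0 → Q = Pss) ∧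
      (∀ P0 : Fin L → ℝ, (∀ n, 0 ≤ P0 n) → (∑ n, P0 n = 1) →
        Tendsto (fun t : ℝ => (NormedSpace.exp (t • W)).mulVec P0) atTop (nhds Pss)) := by
  obtain ⟨hoff, hcol⟩ := hW
  have : Nonempty (Fin L) := ⟨⟨0, hL⟩⟩
  have hM : exp W ∈ colStochastic ℝ (Fin L) := by
    simpa using exp_smul_mem_colStochastic hoff hcol zero_le_one
  have hpos := exp_apply_pos_of_isIrreducibleRateMatrix hoff hirr
  obtain ⟨p, hp_pos, hp_sum, hp_fix, hp_uniq⟩ := exists_unique_mulVec_eq_self_of_pos hM hpos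
  have hWp : W *ᵥ p = 0 := mulVec_eq_zero_of_forall_exp_smul_mulVec_eq fun t ht => by
    refine hp_uniq _ ?_ ?_
    · rw [sum_mulVec_of_mem_colStochastic (exp_smul_mem_colStochastic hoff hcol ht), hp_sum]
    · have hcomm : exp W * exp (t • W) = exp (t • W) * exp W := by
        simpa using (commute_exp_smul W 1 t).eq
      rw [mulVec_mulVec, hcomm, ← mulVec_mulVec, hp_fix]
  refine ⟨p, hp_pos, hp_sum, hWp, fun Q _ hQ hWQ => hp_uniq Q hQ ?_, fun P0 _ hP0 => ?_⟩
  · simpa using exp_smul_mulVec_of_mulVec_eq_zero hWQ 1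
  · have := tendsto_exp_smul_mulVec_nhds_zero hoff hcol hpos (x := P0 - p)
      (by simp [Finset.sum_sub_distrib, hP0, hp_sum])
    simpa [mulVec_sub, exp_smul_mulVec_of_mulVec_eq_zero hWp] using this.add_const p
end

section
/- Let W be a transition rate matrix on {1, …, L} with all off-diagonal entries strictly positive, and let P(t) be a differentiable solution of the master equation dP_n/dt = Σ_{n'} W_{n,n'} P_{n'} with P_n(t) > 0 for all n and all t in an open interval. Define the Shannon entropy S(t) = −Σ_n P_n(t) ln P_n(t). Then for all such t, dS/dt = (1/2) Σ_{n≠n'} (W_{n,n'}P_{n'} − W_{n',n}P_n) ln(W_{n',n}/W_{n,n'}) + (1/2) Σ_{n≠n'} (W_{n,n'}P_{n'} − W_{n',n}P_n) ln( W_{n,n'}P_{n'} / (W_{n',n}P_n) ); that is, the instantaneous rate of entropy change decomposes into the entropy exchange rate (first sum) plus the entropy production rate (second sum). -/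
/-!
Termwise, `ln (W n' n / W n n') + ln (W n n' Pₙ' / (W n' n Pₙ)) = ln Pₙ' - ln Pₙ`, so the
right-hand side is `(1/2) Σ J n n' (ln Pₙ' - ln Pₙ)` with the antisymmetric flux
`J n n' = W n n' Pₙ' - W n' n Pₙ`. Symmetrising and using the zero column sums of `W` turns this
into `-Σₙ (W P)ₙ ln Pₙ`, which is `dS/dt`: differentiating `Pₙ ln Pₙ` gives
`(W P)ₙ (ln Pₙ + 1)`, and `Σₙ (W P)ₙ = 0` removes the `+ 1`.
-/

open Finset Real Matrix

namespace Matrix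

variable {ι R : Type*} [Fintype ι]

theorem sum_mulVec_eq_zero_of_sum_col_eq_zero [CommSemiring R] {W : Matrix ι ι R}
    (hcol : ∀ j, ∑ i, W i j = 0) (x : ι → R) : ∑ i, (W *ᵥ x) i = 0 := by
  simp only [mulVec, dotProduct]
  rw [sum_comm]
  simp only [← sum_mul, hcol, zero_mul, sum_const_zero]

theorem sum_sum_mul_sub_eq_neg_sum_mulVec_mul [CommRing R] {W : Matrix ι ι R}
    (hcol : ∀ j, ∑ i, W i j = 0) (x y : ι → R) :
    ∑ i, ∑ j, W i j * x j * (y j - y i) = -∑ i, (W *ᵥ x) i * y i := by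
  have hdiag : ∑ i, ∑ j, W i j * x j * y j = 0 := by
    rw [sum_comm]
    simp only [← sum_mul, hcol, zero_mul, sum_const_zero]
  simp only [mul_sub, sum_sub_distrib, hdiag, zero_sub, mulVec, dotProduct, sum_mul]

theorem sum_sum_flux_mul_sub_eq_neg_two_mul [CommRing R] {W : Matrix ι ι R}
    (hcol : ∀ j, ∑ i, W i j = 0) (x y : ι → R) :
    ∑ i, ∑ j, (W i j * x j - W j i * x i) * (y j - y i) = -2 * ∑ i, (W *ᵥ x) i * y i := by
  have hswap : ∑ i, ∑ j, W j i * x i * (y j - y i) = -∑ i, ∑ j, W i j * x j * (y j - y i) := by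
    rw [sum_comm]
    simp only [← sum_neg_distrib]
    exact sum_congr rfl fun _ _ => sum_congr rfl fun _ _ => by ring
  simp only [sub_mul (W _ _ * x _), sum_sub_distrib]
  rw [hswap, sum_sum_mul_sub_eq_neg_sum_mulVec_mul hcol]
  ring

end Matrix

theorem Real.log_div_add_log_mul_div_mul {a b x y : ℝ} (ha : a ≠ 0) (hb : b ≠ 0) (hx : x ≠ 0)
    (hy : y ≠ 0) : log (b / a) + log (a * x / (b * y)) = log x - log y := by
  rw [← log_mul (div_ne_zero hb ha) (div_ne_zero (mul_ne_zero ha hx) (mul_ne_zero hb hy)),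
    ← log_div hx hy]
  congr 1
  field_simp

theorem HasDerivAt.neg_sum_mul_log {ι : Type*} [Fintype ι] {p : ℝ → ι → ℝ} {q : ι → ℝ} {t : ℝ}
    (hp : ∀ i, HasDerivAt (fun u => p u i) (q i) t) (hp0 : ∀ i, p t i ≠ 0) :
    HasDerivAt (fun u => -∑ i, p u i * Real.log (p u i))
      (-∑ i, (q i * Real.log (p t i) + q i)) t := by
  refine .neg (.fun_sum fun i _ => ?_)
  refine ((Real.hasDerivAt_mul_log (hp0 i)).comp t (hp i)).congr_deriv ?_
  ring

theorem entropy_rate_decomposition_master_equation_general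
    {L : ℕ} (W : Matrix (Fin L) (Fin L) ℝ)
    (hW : IsTransitionRateMatrix W)
    (hpos : ∀ n n' : Fin L, n ≠ n' → 0 < W n n')
    (s : Set ℝ)
    (P : ℝ → Fin L → ℝ)
    (hPpos : ∀ t ∈ s, ∀ n, 0 < P t n)
    (hPderiv : ∀ t ∈ s, ∀ n, HasDerivAt (fun u => P u n) (∑ n', W n n' * P t n') t) :
    ∀ t ∈ s,
      HasDerivAt (fun u => -∑ n, P u n * Real.log (P u n))
        ((1 / 2) * ∑ n, ∑ n', (if n = n' then 0 else
            (W n n' * P t n' - W n' n * P t n) * Real.log (W n' n / W n n'))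
         + (1 / 2) * ∑ n, ∑ n', (if n = n' then 0 else
            (W n n' * P t n' - W n' n * P t n)
              * Real.log (W n n' * P t n' / (W n' n * P t n)))) t := by
  intro t ht
  have hP0 : ∀ n, P t n ≠ 0 := fun n => (hPpos t ht n).ne'
  have hentropy := HasDerivAt.neg_sum_mul_log (q := W *ᵥ P t) (hPderiv t ht) hP0
  have hsplit : ∀ n n', ((if n = n' then 0 else
        (W n n' * P t n' - W n' n * P t n) * log (W n' n / W n n'))
      + (if n = n' then 0 else
        (W n n' * P t n' - W n' n * P t n) * log (W n n' * P t n' / (W n' n * P t n))))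
      = (W n n' * P t n' - W n' n * P t n) * (log (P t n') - log (P t n)) := by
    intro n n'
    rcases eq_or_ne n n' with rfl | h
    · simp
    · rw [if_neg h, if_neg h, ← mul_add, log_div_add_log_mul_div_mul (hpos n n' h).ne'
        (hpos n' n h.symm).ne' (hP0 n') (hP0 n)]
  convert hentropy using 1
  calc _ = (1 / 2) * ∑ n, ∑ n', (W n n' * P t n' - W n' n * P t n)
          * (log (P t n') - log (P t n)) := by
        simp only [← mul_add, ← sum_add_distrib, hsplit]
    _ = -∑ n, (W *ᵥ P t) n * log (P t n) := by
        rw [sum_sum_flux_mul_sub_eq_neg_two_mul hW.2]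
        ring
    _ = _ := by
        rw [sum_add_distrib, sum_mulVec_eq_zero_of_sum_col_eq_zero hW.2, add_zero]

/-- **Entropy balance for the master equation.**
Along a positive solution of the master equation `dPₙ/dt = Σₙ' W n n' Pₙ'`
(with all off-diagonal rates strictly positive), the Shannon entropy
`S(t) = −Σₙ Pₙ ln Pₙ` has derivative equal to the entropy exchange rate
`(1/2) Σ_{n≠n'} (W n n' P n' − W n' n P n) ln(W n' n / W n n')` plus the
entropy production rate
`(1/2) Σ_{n≠n'} (W n n' P n' − W n' n P n) ln(W n n' P n' / (W n' n P n))`. -/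
theorem entropy_rate_decomposition_master_equation
    {L : ℕ} (W : Matrix (Fin L) (Fin L) ℝ)
    (hW : IsTransitionRateMatrix W)
    (hpos : ∀ n n' : Fin L, n ≠ n' → 0 < W n n')
    (s : Set ℝ) (hs : IsOpen s)
    (P : ℝ → Fin L → ℝ)
    (hPpos : ∀ t ∈ s, ∀ n, 0 < P t n)
    (hPderiv : ∀ t ∈ s, ∀ n, HasDerivAt (fun u => P u n) (∑ n', W n n' * P t n') t) :
    ∀ t ∈ s,
      HasDerivAt (fun u => -∑ n, P u n * Real.log (P u n))
        ((1 / 2) * ∑ n, ∑ n', (if n = n' then 0 else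
            (W n n' * P t n' - W n' n * P t n) * Real.log (W n' n / W n n'))
         + (1 / 2) * ∑ n, ∑ n', (if n = n' then 0 else
            (W n n' * P t n' - W n' n * P t n)
              * Real.log (W n n' * P t n' / (W n' n * P t n)))) t :=
  entropy_rate_decomposition_master_equation_general W hW hpos s P hPpos hPderiv
end

section
/- Let W be a transition rate matrix on {1, …, L} with all off-diagonal entries strictly positive, let P^{ss} be a stationary probability vector (W P^{ss} = 0) with P^{ss}_n > 0 for all n, and let P be any probability vector with P_n > 0 for all n. Then the house-keeping energy input rate Ė_{hk} = (1/2) Σ_{n≠n'} (W_{n,n'}P_{n'} − W_{n',n}P_n) ln( W_{n,n'}P^{ss}_{n'} / (W_{n',n}P^{ss}_n) ) is nonnegative. -/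
/-!
Write `a n n' = W n n' Pss n'` for the stationary fluxes and `r n = P n / Pss n`, so that the
flux in state `P` is `W n n' P n' = r n' a n n'`. Since the logarithm is antisymmetric in
`(n, n')`, the rate is `Σ r n' a n n' log (a n n' / a n' n)`, and `a log (a / b) ≥ a - b`
bounds it below by `Σ_{n'} r n' (Σ_n a n n' - Σ_n a n' n)`. Both inner sums vanish: the first
because the columns of `W` sum to zero, the second because `W Pss = 0`.
-/

open Finset Real

lemma Real.sub_le_mul_log_div {a b : ℝ} (ha : 0 < a) (hb : 0 < b) :
    a - b ≤ a * log (a / b) := by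
  have h := one_sub_inv_le_log_of_pos (div_pos ha hb)
  rw [inv_div] at h
  calc a - b = a * (1 - b / a) := by field_simp
    _ ≤ a * log (a / b) := mul_le_mul_of_nonneg_left h ha.le

lemma Finset.sum_sub_swap_mul_of_antisymm {ι : Type*} [Fintype ι] (x y : ι → ι → ℝ)
    (hy : ∀ i j, y j i = -y i j) :
    ∑ i, ∑ j, (x i j - x j i) * y i j = 2 * ∑ i, ∑ j, x i j * y i j := by
  have hswap : ∑ i, ∑ j, x j i * y i j = -∑ i, ∑ j, x i j * y i j := by
    rw [sum_comm]
    simp only [← sum_neg_distrib, ← mul_neg, ← hy]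
  simp only [sub_mul, sum_sub_distrib, hswap]
  ring

lemma sum_mul_log_div_nonneg_of_balanced {ι : Type*} [Fintype ι] (a : ι → ι → ℝ)
    (ha : ∀ i j, i ≠ j → 0 < a i j) (hbal : ∀ j, ∑ i, a i j = ∑ i, a j i)
    (r : ι → ℝ) (hr : ∀ j, 0 ≤ r j) :
    0 ≤ ∑ i, ∑ j, r j * (a i j * log (a i j / a j i)) := by
  have hterm : ∀ i j, r j * (a i j - a j i) ≤ r j * (a i j * log (a i j / a j i)) := by
    intro i j
    rcases eq_or_ne i j with rfl | hij
    · simp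
    · exact mul_le_mul_of_nonneg_left (sub_le_mul_log_div (ha i j hij) (ha j i hij.symm)) (hr j)
  calc (0 : ℝ) = ∑ j, r j * (∑ i, a i j - ∑ i, a j i) := by simp [hbal]
    _ = ∑ i, ∑ j, r j * (a i j - a j i) := by
      rw [sum_comm]
      simp only [← sum_sub_distrib, mul_sum]
    _ ≤ _ := sum_le_sum fun i _ => sum_le_sum fun j _ => hterm i j

theorem housekeeping_rate_nonneg_general
    {L : ℕ} (W : Matrix (Fin L) (Fin L) ℝ)
    (hW : IsTransitionRateMatrix W)
    (hpos : ∀ n n' : Fin L, n ≠ n' → 0 < W n n')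
    (Pss : Fin L → ℝ) (hPss : ∀ n, 0 < Pss n)
    (hstat : W.mulVec Pss = 0)
    (P : Fin L → ℝ) (hP : ∀ n, 0 < P n) :
    0 ≤ (1 / 2) * ∑ n, ∑ n', (if n = n' then 0 else
        (W n n' * P n' - W n' n * P n)
          * Real.log (W n n' * Pss n' / (W n' n * Pss n))) := by
  set a : Fin L → Fin L → ℝ := fun n n' => W n n' * Pss n'
  have hbal : ∀ n', ∑ n, a n n' = ∑ n, a n' n := by
    intro n'
    have hcol : ∑ n, a n n' = 0 := by simp only [a, ← sum_mul, hW.2 n', zero_mul]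
    rw [hcol]
    exact (congrFun hstat n').symm
  have hflux : ∀ n n', W n n' * P n' = P n' / Pss n' * a n n' := fun n n' => by
    simp only [a]
    field_simp [(hPss n').ne']
  have hsummand : ∀ n n', (if n = n' then 0 else
      (W n n' * P n' - W n' n * P n) * log (W n n' * Pss n' / (W n' n * Pss n)))
      = (W n n' * P n' - W n' n * P n) * log (a n n' / a n' n) := by
    intro n n'
    split_ifs with h <;> simp [h, a]
  have hanti : ∀ n n', log (a n' n / a n n') = -log (a n n' / a n' n) := fun n n' => by
    rw [← log_inv, inv_div]
  rw [sum_congr rfl fun n _ => sum_congr rfl fun n' _ => hsummand n n',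
    sum_sub_swap_mul_of_antisymm (fun n n' => W n n' * P n') _ hanti]
  simp only [hflux, mul_assoc]
  have hlower := sum_mul_log_div_nonneg_of_balanced a (fun n n' h => mul_pos (hpos n n' h) (hPss n'))
    hbal (fun n => P n / Pss n) fun n => (div_pos (hP n) (hPss n)).le
  linarith

/-- **Nonnegativity of the house-keeping energy input rate.**
For a transition rate matrix `W` with strictly positive off-diagonal entries,
a strictly positive stationary probability vector `Pss` and any strictly
positive probability vector `P`, the house-keeping rate
`Ė_hk = (1/2) Σ_{n≠n'} (W n n' P n' − W n' n P n) ln(W n n' Pss n' / (W n' n Pss n))`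
is nonnegative. -/
theorem housekeeping_rate_nonneg
    {L : ℕ} (W : Matrix (Fin L) (Fin L) ℝ)
    (hW : IsTransitionRateMatrix W)
    (hpos : ∀ n n' : Fin L, n ≠ n' → 0 < W n n')
    (Pss : Fin L → ℝ) (hPss : ∀ n, 0 < Pss n) (hPsssum : ∑ n, Pss n = 1)
    (hstat : W.mulVec Pss = 0)
    (P : Fin L → ℝ) (hP : ∀ n, 0 < P n) (hPsum : ∑ n, P n = 1) :
    0 ≤ (1 / 2) * ∑ n, ∑ n', (if n = n' then 0 else
        (W n n' * P n' - W n' n * P n)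
          * Real.log (W n n' * Pss n' / (W n' n * Pss n))) :=
  housekeeping_rate_nonneg_general W hW hpos Pss hPss hstat P hP
end

section
/- Let W be an irreducible transition rate matrix on {1, …, L} and let P^{ss} be its (unique) stationary probability vector, which has all entries positive. Then the condition of detailed balance, W_{n,n'} P^{ss}_{n'} = W_{n',n} P^{ss}_n for all n, n', holds if and only if W satisfies the Kolmogorov cycle condition: for every k ≥ 1 and every sequence of distinct states n₀, n₁, …, n_k, one has W_{n₀,n₁} W_{n₁,n₂} ⋯ W_{n_{k−1},n_k} W_{n_k,n₀} = W_{n₀,n_k} W_{n_k,n_{k−1}} ⋯ W_{n₂,n₁} W_{n₁,n₀}. -/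
/-!
Detailed balance says that the flux `W n n' * Pss n'` is symmetric in `n, n'`; multiplying the two
sides of Kolmogorov's identity by `∏ Pss (m s)` turns them into the products of the fluxes around the
cycle in its two directions, which then agree.

Conversely, the net current `J n n' = W n n' * Pss n' - W n' n * Pss n` is antisymmetric and, by
stationarity and the zero column sums, divergence-free. If it is not identically zero, a state with
positive inflow also has positive outflow, so following edges of positive current in the finite state
space closes a simple cycle on which every forward flux strictly exceeds the backward one. The forward
product of fluxes is then strictly smaller than the backward one, contradicting Kolmogorov's identity
multiplied by `∏ Pss (m s)`.
-/

open Finset Function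
open scoped Matrix

theorem Function.exists_iterate_mem_periodicPts {α : Type*} [Finite α] (f : α → α) (x : α) :
    ∃ n, f^[n] x ∈ periodicPts f := by
  obtain ⟨m, n, hne, heq⟩ := Finite.exists_ne_map_eq_of_infinite (f^[·] x)
  wlog hmn : m < n generalizing m n
  · exact this n m hne.symm heq.symm (by omega)
  refine ⟨m, mk_mem_periodicPts (n := n - m) (by omega) ?_⟩
  change f^[n - m] (f^[m] x) = f^[m] x
  rw [← iterate_add_apply, Nat.sub_add_cancel hmn.le]
  exact heq.symm

theorem Function.exists_injective_cycle {α : Type*} [Finite α] (f : α → α) (x : α) :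
    ∃ (k : ℕ) (m : Fin (k + 1) → α), Injective m ∧
      (∀ i : Fin k, f (m i.castSucc) = m i.succ) ∧ f (m (Fin.last k)) = m 0 := by
  obtain ⟨n, hy⟩ := exists_iterate_mem_periodicPts f x
  generalize f^[n] x = y at hy
  obtain ⟨k, hk⟩ := Nat.exists_eq_add_of_lt (minimalPeriod_pos_of_mem_periodicPts hy)
  refine ⟨k, fun i => f^[i] y, fun i j hij => Fin.ext ?_, fun i => ?_, ?_⟩
  · exact iterate_injOn_Iio_minimalPeriod (Set.mem_Iio.2 (by omega)) (Set.mem_Iio.2 (by omega)) hij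
  · exact (iterate_succ_apply' f i y).symm
  · simp only [Fin.val_last, Fin.val_zero, iterate_zero, id_eq, ← iterate_succ_apply' f k y]
    rw [show k.succ = minimalPeriod f y by omega]
    exact iterate_minimalPeriod

section Circulation

variable {α R : Type*} [Fintype α] [AddCommGroup R] [LinearOrder R] [IsOrderedAddMonoid R]
  {J : α → α → R}

theorem exists_pos_out_of_pos_in (hanti : ∀ x y, J x y = -J y x)
    (hdiv : ∀ y, ∑ x, J x y = 0) {x y : α} (hxy : 0 < J y x) : ∃ z, 0 < J z y := by
  by_contra! hle
  have hx := (sum_eq_zero_iff_of_nonpos fun z _ => hle z).1 (hdiv y) x (mem_univ x)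
  rw [hanti] at hx
  exact hxy.ne' (neg_eq_zero.1 hx)

theorem exists_injective_cycle_of_pos (hanti : ∀ x y, J x y = -J y x)
    (hdiv : ∀ y, ∑ x, J x y = 0) {a b : α} (hab : 0 < J b a) :
    ∃ k, 1 ≤ k ∧ ∃ m : Fin (k + 1) → α, Injective m ∧
      (∀ i : Fin k, 0 < J (m i.succ) (m i.castSucc)) ∧ 0 < J (m 0) (m (Fin.last k)) := by
  let S := {y // ∃ x, 0 < J y x}
  have hnext (y : S) : ∃ z : S, 0 < J z y :=
    let ⟨z, hz⟩ := exists_pos_out_of_pos_in hanti hdiv y.2.choose_spec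
    ⟨⟨z, y, hz⟩, hz⟩
  choose f hf using hnext
  obtain ⟨k, m, hm, hstep, hwrap⟩ := exists_injective_cycle f ⟨b, a, hab⟩
  have hk : 1 ≤ k := by
    by_contra! hk0
    obtain rfl : k = 0 := by omega
    have hpos : 0 < J (m 0) (m 0) := by
      have h := hf (m (Fin.last 0))
      rwa [hwrap] at h
    have hneg := hpos
    rw [hanti, neg_pos] at hneg
    exact hpos.asymm hneg
  refine ⟨k, hk, Subtype.val ∘ m, Subtype.val_injective.comp hm, fun i => ?_, ?_⟩
  · simpa only [comp_apply, hstep i] using hf (m i.castSucc)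
  · simpa only [comp_apply, hwrap] using hf (m (Fin.last k))

end Circulation

section CycleProd

variable {α R : Type*}

def cycleProd [CommMonoid R] (A : α → α → R) {k : ℕ} (m : Fin (k + 1) → α) : R :=
  (∏ i : Fin k, A (m i.castSucc) (m i.succ)) * A (m (Fin.last k)) (m 0)

theorem cycleProd_mul_right [CommMonoid R] (A : α → α → R) (g : α → R) {k : ℕ}
    (m : Fin (k + 1) → α) :
    cycleProd (fun x y => A x y * g y) m = cycleProd A m * ∏ s, g (m s) := by
  simp only [cycleProd, prod_mul_distrib, Fin.prod_univ_succ (fun s => g (m s))]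
  ac_rfl

theorem cycleProd_mul_left [CommMonoid R] (A : α → α → R) (g : α → R) {k : ℕ}
    (m : Fin (k + 1) → α) :
    cycleProd (fun x y => A x y * g x) m = cycleProd A m * ∏ s, g (m s) := by
  simp only [cycleProd, prod_mul_distrib, Fin.prod_univ_castSucc (fun s => g (m s))]
  exact mul_mul_mul_comm ..

theorem cycleProd_lt_cycleProd [CommSemiring R] [PartialOrder R] [IsStrictOrderedRing R]
    {A B : α → α → R} {k : ℕ} {m : Fin (k + 1) → α}
    (hA : ∀ i : Fin k, 0 ≤ A (m i.castSucc) (m i.succ)) (hA_last : 0 ≤ A (m (Fin.last k)) (m 0))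
    (hAB : ∀ i : Fin k, A (m i.castSucc) (m i.succ) < B (m i.castSucc) (m i.succ))
    (hAB_last : A (m (Fin.last k)) (m 0) < B (m (Fin.last k)) (m 0)) :
    cycleProd A m < cycleProd B m :=
  mul_lt_mul_of_le_of_lt_of_nonneg_of_pos
    (prod_le_prod (fun i _ => hA i) fun i _ => (hAB i).le) hAB_last hA_last
    (prod_pos fun i _ => (hA i).trans_lt (hAB i))

end CycleProd

section RateMatrix

variable {α : Type*} [Fintype α] {W : α → α → ℝ} {P : α → ℝ}

theorem sum_flux_sub_eq_zero (hcol : ∀ y, ∑ x, W x y = 0) (hstat : W *ᵥ P = 0) (y : α) :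
    ∑ x, (W x y * P y - W y x * P x) = 0 := by
  rw [sum_sub_distrib, ← sum_mul, hcol, zero_mul, zero_sub, neg_eq_zero]
  exact congrFun hstat y

omit [Fintype α] in
theorem cycleProd_eq_cycleProd_flip (hP : ∀ x, P x ≠ 0)
    (hdb : ∀ x y, W x y * P y = W y x * P x) {k : ℕ} (m : Fin (k + 1) → α) :
    cycleProd W m = cycleProd (flip W) m := by
  refine mul_right_cancel₀ (b := ∏ s, P (m s)) (prod_ne_zero_iff.2 fun s _ => hP (m s)) ?_
  rw [← cycleProd_mul_right, ← cycleProd_mul_left]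
  simp only [flip, hdb]

theorem detailed_balance_of_cycleProd_eq (hoff : ∀ x y, x ≠ y → 0 ≤ W x y)
    (hcol : ∀ y, ∑ x, W x y = 0) (hP : ∀ x, 0 ≤ P x) (hstat : W *ᵥ P = 0)
    (hK : ∀ k, 1 ≤ k → ∀ m : Fin (k + 1) → α, Injective m → cycleProd W m = cycleProd (flip W) m)
    (x y : α) : W x y * P y = W y x * P x := by
  by_contra hxy
  let J x y := W x y * P y - W y x * P x
  have hanti (x y : α) : J x y = -J y x := by ring
  obtain ⟨a, b, hab⟩ : ∃ a b, 0 < J b a := by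
    rcases lt_or_gt_of_ne (sub_ne_zero.2 hxy) with h | h
    · exact ⟨x, y, by rw [hanti]; exact neg_pos.2 h⟩
    · exact ⟨y, x, h⟩
  obtain ⟨k, hk, m, hm, hstep, hwrap⟩ :=
    exists_injective_cycle_of_pos hanti (sum_flux_sub_eq_zero hcol hstat) hab
  have hflux_nonneg {x y : α} (hxy : x ≠ y) : 0 ≤ W x y * P y := mul_nonneg (hoff x y hxy) (hP y)
  have hlt : cycleProd (fun x y => W x y * P y) m < cycleProd (fun x y => flip W x y * P x) m :=
    cycleProd_lt_cycleProd (fun i => hflux_nonneg (hm.ne Fin.castSucc_lt_succ.ne))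
      (hflux_nonneg (hm.ne fun h => by
        simp only [Fin.ext_iff, Fin.val_last, Fin.val_zero] at h
        omega))
      (fun i => sub_pos.1 (hstep i)) (sub_pos.1 hwrap)
  rw [cycleProd_mul_right, cycleProd_mul_left, hK k hk m hm] at hlt
  exact hlt.false

end RateMatrix

theorem detailed_balance_iff_kolmogorov_cycle_condition_general
    {L : ℕ} (W : Matrix (Fin L) (Fin L) ℝ)
    (hW : IsTransitionRateMatrix W)
    (Pss : Fin L → ℝ) (hPss : ∀ n, 0 < Pss n)
    (hstat : W.mulVec Pss = 0) :
    (∀ n n' : Fin L, W n n' * Pss n' = W n' n * Pss n)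
    ↔ (∀ (k : ℕ), 1 ≤ k → ∀ m : Fin (k + 1) → Fin L, Function.Injective m →
        (∏ i : Fin k, W (m i.castSucc) (m i.succ)) * W (m (Fin.last k)) (m 0)
          = (∏ i : Fin k, W (m i.succ) (m i.castSucc)) * W (m 0) (m (Fin.last k))) :=
  ⟨fun hdb _ _ m _ => cycleProd_eq_cycleProd_flip (fun n => (hPss n).ne') hdb m,
    detailed_balance_of_cycleProd_eq hW.1 hW.2 (fun n => (hPss n).le) hstat⟩

/-- **Detailed balance ↔ Kolmogorov cycle condition.**
For an irreducible transition rate matrix `W` with stationary probability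
vector `Pss` (all entries positive), the stationary distribution satisfies
detailed balance `W n n' · Pss n' = W n' n · Pss n` for all `n, n'` if and only
if for every `k ≥ 1` and every sequence of distinct states `n₀, n₁, …, n_k`,
`W_{n₀,n₁} W_{n₁,n₂} ⋯ W_{n_{k−1},n_k} W_{n_k,n₀}
  = W_{n₀,n_k} W_{n_k,n_{k−1}} ⋯ W_{n₂,n₁} W_{n₁,n₀}`. -/
theorem detailed_balance_iff_kolmogorov_cycle_condition
    {L : ℕ} (W : Matrix (Fin L) (Fin L) ℝ)
    (hW : IsTransitionRateMatrix W) (hirr : IsIrreducibleRateMatrix W)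
    (Pss : Fin L → ℝ) (hPss : ∀ n, 0 < Pss n) (hPsssum : ∑ n, Pss n = 1)
    (hstat : W.mulVec Pss = 0) :
    (∀ n n' : Fin L, W n n' * Pss n' = W n' n * Pss n)
    ↔ (∀ (k : ℕ), 1 ≤ k → ∀ m : Fin (k + 1) → Fin L, Function.Injective m →
        (∏ i : Fin k, W (m i.castSucc) (m i.succ)) * W (m (Fin.last k)) (m 0)
          = (∏ i : Fin k, W (m i.succ) (m i.castSucc)) * W (m 0) (m (Fin.last k))) :=
  detailed_balance_iff_kolmogorov_cycle_condition_general W hW Pss hPss hstat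
end

section
/- Consider a mass-action chemical reaction network with N species, M reversible reactions, rate constants k_i^± > 0, and standard chemical potentials μ_j^0 ∈ ℝ satisfying the compatibility relation ln(k_i^+/k_i^-) = Σ_{j=1}^N (ν⁺_{ij} − ν⁻_{ij}) μ_j^0 for every i. Define the Gibbs free energy G(c) = Σ_{j=1}^N (μ_j^0 + ln c_j) c_j − Σ_{j=1}^N c_j + G^0 for c in the open positive orthant, where G^0 is a constant. Then along any differentiable solution c(t) of the chemical rate equations taking values in the open positive orthant, dG(c(t))/dt = −Σ_{i=1}^M (R_i^+(c(t)) − R_i^-(c(t))) ln( R_i^+(c(t)) / R_i^-(c(t)) ) ≤ 0; that is, the Gibbs free energy is monotonically non-increasing in time. -/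
/-!
Write `μ_j = μ0_j + ln c_j` for the chemical potentials. Since `∂G/∂c_j = μ_j`, the chain rule
gives `dG/dt = Σ_j μ_j ċ_j = −Σ_i (R⁺_i − R⁻_i) Σ_j (ν⁺_ij − ν⁻_ij) μ_j`, and the compatibility
relation turns the inner sum into `ln (R⁺_i / R⁻_i)`. Each term `(x − y) ln (x / y)` is
nonnegative because `ln` is increasing.
-/

open Finset Real

section MassAction

variable {ι : Type*} [Fintype ι]

noncomputable def gibbsFreeEnergy (μ0 : ι → ℝ) (G0 : ℝ) (c : ι → ℝ) : ℝ :=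
  ∑ j, (μ0 j + log (c j)) * c j - ∑ j, c j + G0

theorem hasDerivAt_add_log_mul_sub {f : ℝ → ℝ} {f' t : ℝ} (a : ℝ)
    (hf : HasDerivAt f f' t) (hft : f t ≠ 0) :
    HasDerivAt (fun u => (a + log (f u)) * f u - f u) ((a + log (f t)) * f') t := by
  have hlog : HasDerivAt (fun u => a + log (f u)) (f' / f t) t :=
    (hf.log hft).const_add a
  refine ((hlog.mul hf).sub hf).congr_deriv ?_
  field_simp
  ring

theorem hasDerivAt_gibbsFreeEnergy (μ0 : ι → ℝ) (G0 : ℝ) {c : ℝ → ι → ℝ} {c' : ι → ℝ}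
    {t : ℝ} (hc : ∀ j, HasDerivAt (fun u => c u j) (c' j) t) (hpos : ∀ j, 0 < c t j) :
    HasDerivAt (fun u => gibbsFreeEnergy μ0 G0 (c u))
      (∑ j, (μ0 j + log (c t j)) * c' j) t := by
  have hsum := HasDerivAt.fun_sum (u := univ) fun j _ =>
    hasDerivAt_add_log_mul_sub (μ0 j) (hc j) (hpos j).ne'
  refine (hsum.add_const G0).congr_of_eventuallyEq (Filter.Eventually.of_forall fun u => ?_)
  simp only [gibbsFreeEnergy, sum_sub_distrib]

theorem mul_prod_pow_pos {k : ℝ} {x : ι → ℝ} (ν : ι → ℕ)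
    (hk : 0 < k) (hx : ∀ l, 0 < x l) : 0 < k * ∏ l, x l ^ ν l :=
  mul_pos hk (prod_pos fun l _ => pow_pos (hx l) _)

theorem log_mul_prod_pow {k : ℝ} {x : ι → ℝ} (ν : ι → ℕ)
    (hk : 0 < k) (hx : ∀ l, 0 < x l) :
    log (k * ∏ l, x l ^ ν l) = log k + ∑ l, (ν l : ℝ) * log (x l) := by
  rw [log_mul hk.ne' (prod_pos fun l _ => pow_pos (hx l) _).ne',
    log_prod fun l _ => pow_ne_zero _ (hx l).ne']
  simp only [log_pow]

theorem log_rate_ratio_eq_sum_mul_potential {kp km : ℝ}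
    {νp νm : ι → ℕ} {μ0 x : ι → ℝ} (hkp : 0 < kp) (hkm : 0 < km)
    (hcompat : log (kp / km) = ∑ j, ((νp j : ℝ) - νm j) * μ0 j) (hx : ∀ l, 0 < x l) :
    log ((kp * ∏ l, x l ^ νp l) / (km * ∏ l, x l ^ νm l))
      = ∑ j, ((νp j : ℝ) - νm j) * (μ0 j + log (x j)) := by
  rw [log_div (mul_prod_pow_pos νp hkp hx).ne' (mul_prod_pow_pos νm hkm hx).ne',
    log_mul_prod_pow νp hkp hx, log_mul_prod_pow νm hkm hx]
  rw [log_div hkp.ne' hkm.ne'] at hcompat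
  simp only [sub_mul, sum_sub_distrib] at hcompat
  simp only [mul_add, sum_add_distrib, sub_mul, sum_sub_distrib]
  linarith

theorem sub_mul_log_div_nonneg {x y : ℝ} (hx : 0 < x) (hy : 0 < y) :
    0 ≤ (x - y) * log (x / y) := by
  rw [log_div hx.ne' hy.ne']
  rcases le_total x y with hxy | hyx
  · exact mul_nonneg_of_nonpos_of_nonpos (sub_nonpos.2 hxy)
      (sub_nonpos.2 (log_le_log hx hxy))
  · exact mul_nonneg (sub_nonneg.2 hyx) (sub_nonneg.2 (log_le_log hy hyx))

/-- **Monotone decrease of the Gibbs free energy for mass-action kinetics.**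
Consider a mass-action reaction network with stoichiometric coefficients
`νp i j, νm i j`, rate constants `kp i, km i > 0` and standard chemical
potentials `μ0 j` satisfying `ln(kp i / km i) = Σ_j (νp i j − νm i j) μ0 j`.
Along any positive solution `c(t)` of the rate equations
`dc_j/dt = Σ_i (νm i j − νp i j) (R⁺_i(c) − R⁻_i(c))`, where
`R⁺_i(c) = kp i ∏_l c_l^{νp i l}` and `R⁻_i(c) = km i ∏_l c_l^{νm i l}`,
the Gibbs free energy `G(c) = Σ_j (μ0 j + ln c_j) c_j − Σ_j c_j + G0`
satisfies `dG/dt = −Σ_i (R⁺_i − R⁻_i) ln(R⁺_i / R⁻_i) ≤ 0`. -/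
theorem gibbs_free_energy_decreases_mass_action
    {N M : ℕ} (νp νm : Fin M → Fin N → ℕ) (kp km : Fin M → ℝ)
    (hkp : ∀ i, 0 < kp i) (hkm : ∀ i, 0 < km i)
    (μ0 : Fin N → ℝ) (G0 : ℝ)
    (hcompat : ∀ i, Real.log (kp i / km i)
      = ∑ j, ((νp i j : ℝ) - (νm i j : ℝ)) * μ0 j)
    (c : ℝ → Fin N → ℝ) (hcpos : ∀ t j, 0 < c t j)
    (hcderiv : ∀ t j, HasDerivAt (fun u => c u j)
      (∑ i, ((νm i j : ℝ) - (νp i j : ℝ)) *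
        (kp i * ∏ l, c t l ^ νp i l - km i * ∏ l, c t l ^ νm i l)) t)
    (t : ℝ) :
    HasDerivAt (fun u => ∑ j, (μ0 j + Real.log (c u j)) * c u j - ∑ j, c u j + G0)
      (-∑ i, (kp i * ∏ l, c t l ^ νp i l - km i * ∏ l, c t l ^ νm i l) *
        Real.log ((kp i * ∏ l, c t l ^ νp i l) / (km i * ∏ l, c t l ^ νm i l))) t
    ∧ (-∑ i, (kp i * ∏ l, c t l ^ νp i l - km i * ∏ l, c t l ^ νm i l) *
        Real.log ((kp i * ∏ l, c t l ^ νp i l) / (km i * ∏ l, c t l ^ νm i l))) ≤ 0 := by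
  have hlog : ∀ i, log ((kp i * ∏ l, c t l ^ νp i l) / (km i * ∏ l, c t l ^ νm i l))
      = ∑ j, ((νp i j : ℝ) - νm i j) * (μ0 j + log (c t j)) := fun i =>
    log_rate_ratio_eq_sum_mul_potential (hkp i) (hkm i) (hcompat i) (hcpos t)
  refine ⟨(hasDerivAt_gibbsFreeEnergy μ0 G0 (hcderiv t) (hcpos t)).congr_deriv ?_,
    neg_nonpos.2 (sum_nonneg fun i _ =>
      sub_mul_log_div_nonneg (mul_prod_pow_pos _ (hkp i) (hcpos t))
        (mul_prod_pow_pos _ (hkm i) (hcpos t)))⟩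
  simp only [hlog, mul_sum]
  rw [sum_comm, ← sum_neg_distrib]
  refine sum_congr rfl fun i _ => ?_
  rw [← sum_neg_distrib]
  exact sum_congr rfl fun j _ => by ring
end MassAction
end

section
/- Let R_i^± (i = 1,…,M) be positive-valued rate functions on the open positive orthant of ℝ^N and let φ^{ss} be a differentiable function on the open positive orthant satisfying the stationary Hamilton–Jacobi equation Σ_{i=1}^M [ R_i^+(c) ( exp(ν_i·∇φ^{ss}(c)) − 1 ) + R_i^-(c) ( exp(−ν_i·∇φ^{ss}(c)) − 1 ) ] = 0 for all c in the open positive orthant. Then along any differentiable solution c(t) of the chemical rate equations dc_j/dt = Σ_{i=1}^M ν_{ij} (R_i^+(c) − R_i^-(c)) taking values in the open positive orthant, one has d φ^{ss}(c(t))/dt ≤ 0; that is, the stationary large-deviations rate function is a Lyapunov function for the deterministic rate equations. -/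
/-!
The tangent-line bound `a ≤ exp a - 1`, applied to `±ν_i·∇φ` and weighted by the positive
rates, shows that the rate of change of `φ` along the rate equations, `Σ_i (R_i⁺ - R_i⁻) ν_i·∇φ`,
is bounded by the Hamiltonian `Σ_i [R_i⁺ (e^{ν_i·∇φ} - 1) + R_i⁻ (e^{-ν_i·∇φ} - 1)]`, which
vanishes by the stationary Hamilton–Jacobi equation.
-/

open Real

lemma sub_mul_le_mul_exp_sub_one_add_mul_exp_neg_sub_one {p m : ℝ} (hp : 0 ≤ p) (hm : 0 ≤ m)
    (a : ℝ) : (p - m) * a ≤ p * (exp a - 1) + m * (exp (-a) - 1) := by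
  have hpos : a ≤ exp a - 1 := by linarith [add_one_le_exp a]
  have hneg : -a ≤ exp (-a) - 1 := by linarith [add_one_le_exp (-a)]
  nlinarith [mul_le_mul_of_nonneg_left hpos hp, mul_le_mul_of_nonneg_left hneg hm]

lemma map_drift_le_hamiltonian {ι E : Type*} [Fintype ι] [AddCommGroup E] [Module ℝ E]
    (L : E →ₗ[ℝ] ℝ) (ν : ι → E) {p m : ι → ℝ} (hp : ∀ i, 0 ≤ p i) (hm : ∀ i, 0 ≤ m i) :
    L (∑ i, (p i - m i) • ν i) ≤ ∑ i, (p i * (exp (L (ν i)) - 1) + m i * (exp (-L (ν i)) - 1)) := by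
  simp only [map_sum, map_smul, smul_eq_mul]
  exact Finset.sum_le_sum fun i _ =>
    sub_mul_le_mul_exp_sub_one_add_mul_exp_neg_sub_one (hp i) (hm i) _

/-- **The stationary large-deviations rate function is a Lyapunov function.**
Let `R⁺_i, R⁻_i` be positive rate functions on the open positive orthant and
let `φss` be differentiable there (with derivative `Dφ c` at each point `c`)
and satisfy the stationary Hamilton–Jacobi equation
`Σ_i [ R⁺_i(c)(e^{ν_i·∇φss(c)} − 1) + R⁻_i(c)(e^{−ν_i·∇φss(c)} − 1) ] = 0`.
Then along any positive solution of the rate equations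
`dc_j/dt = Σ_i ν_{ij} (R⁺_i(c) − R⁻_i(c))` one has `d φss(c(t))/dt ≤ 0`. -/
theorem stationary_rate_function_is_lyapunov
    {N M : ℕ} (ν : Fin M → Fin N → ℤ)
    (Rp Rm : Fin M → (Fin N → ℝ) → ℝ)
    (hRp : ∀ i, ∀ c : Fin N → ℝ, (∀ j, 0 < c j) → 0 < Rp i c)
    (hRm : ∀ i, ∀ c : Fin N → ℝ, (∀ j, 0 < c j) → 0 < Rm i c)
    (φss : (Fin N → ℝ) → ℝ)
    (Dφ : (Fin N → ℝ) → ((Fin N → ℝ) →L[ℝ] ℝ))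
    (hφ : ∀ c : Fin N → ℝ, (∀ j, 0 < c j) → HasFDerivAt φss (Dφ c) c)
    (hHJE : ∀ c : Fin N → ℝ, (∀ j, 0 < c j) →
      ∑ i, (Rp i c * (Real.exp (Dφ c fun j => (ν i j : ℝ)) - 1)
          + Rm i c * (Real.exp (-(Dφ c fun j => (ν i j : ℝ))) - 1)) = 0)
    (c : ℝ → Fin N → ℝ) (hcpos : ∀ t j, 0 < c t j)
    (hcderiv : ∀ t j, HasDerivAt (fun u => c u j)
      (∑ i, (ν i j : ℝ) * (Rp i (c t) - Rm i (c t))) t) :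
    ∀ t : ℝ, deriv (fun u => φss (c u)) t ≤ 0 := by
  intro t
  set drift : Fin N → ℝ := ∑ i, (Rp i (c t) - Rm i (c t)) • fun j => (ν i j : ℝ)
  have hc : HasDerivAt c drift t := by
    refine hasDerivAt_pi.2 fun j => ?_
    simpa [drift, Finset.sum_apply, mul_comm] using hcderiv t j
  have hφc : HasDerivAt (fun u => φss (c u)) (Dφ (c t) drift) t :=
    (hφ (c t) (hcpos t)).comp_hasDerivAt t hc
  rw [hφc.deriv, ← hHJE (c t) (hcpos t)]
  exact map_drift_le_hamiltonian (Dφ (c t)).toLinearMap _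
    (fun i => (hRp i _ (hcpos t)).le) (fun i => (hRm i _ (hcpos t)).le)
end

section
/- Consider a mass-action chemical reaction network with N species and M reversible reactions. Suppose c^{ss} in the open positive orthant is complex-balanced, i.e., Σ_{i=1}^M ( R_i^+(c^{ss}) − R_i^-(c^{ss}) ) [ ∏_{j=1}^N (c_j/c_j^{ss})^{ν⁺_{ij}} − ∏_{j=1}^N (c_j/c_j^{ss})^{ν⁻_{ij}} ] = 0 for every c in the open positive orthant. Then the function φ^{ss}(c) = Σ_{j=1}^N [ c_j ln( c_j / c_j^{ss} ) − c_j + c_j^{ss} ] satisfies the stationary Hamilton–Jacobi equation Σ_{i=1}^M [ R_i^+(c) ( exp(ν_i·∇φ^{ss}(c)) − 1 ) + R_i^-(c) ( exp(−ν_i·∇φ^{ss}(c)) − 1 ) ] = 0 for all c in the open positive orthant. -/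
/-!
With `x = c / css`, the Hamiltonian exponent is `e^{ν_i·∇φss(c)} = x^{ν⁻_i} / x^{ν⁺_i}` and the
rates factor as `R^±_i(c) = R^±_i(css) x^{ν^±_i}`. Hence the contribution of reaction `i` to the
Hamilton–Jacobi sum is exactly `-(R⁺_i(css) - R⁻_i(css)) (x^{ν⁺_i} - x^{ν⁻_i})`, and the sum of
these vanishes by complex balance.
-/

open Finset Real

section Monomials

variable {ι : Type*} [Fintype ι]

theorem exp_sum_sub_mul_log_eq_prod_pow_div {x : ι → ℝ} (hx : ∀ j, 0 < x j) (p m : ι → ℕ) :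
    exp (∑ j, ((m j : ℝ) - p j) * log (x j)) = (∏ j, x j ^ m j) / ∏ j, x j ^ p j := by
  rw [exp_sum, ← prod_div_distrib]
  refine prod_congr rfl fun j _ => ?_
  rw [sub_mul, exp_sub, exp_nat_mul, exp_nat_mul, exp_log (hx j)]

theorem prod_pow_eq_prod_pow_mul_prod_div_pow {a : ι → ℝ} (ha : ∀ j, a j ≠ 0) (c : ι → ℝ)
    (p : ι → ℕ) : ∏ j, c j ^ p j = (∏ j, a j ^ p j) * ∏ j, (c j / a j) ^ p j := by
  rw [← prod_mul_distrib]
  exact prod_congr rfl fun j _ => by rw [← mul_pow, mul_div_cancel₀ _ (ha j)]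

theorem reaction_hamiltonian_eq_neg_balance_term {css c : ι → ℝ} (hcss : ∀ j, 0 < css j)
    (hc : ∀ j, 0 < c j) (p m : ι → ℕ) (kp km : ℝ) :
    (kp * ∏ j, c j ^ p j) * (exp (∑ j, ((m j : ℝ) - p j) * log (c j / css j)) - 1)
      + (km * ∏ j, c j ^ m j) * (exp (-∑ j, ((m j : ℝ) - p j) * log (c j / css j)) - 1)
      = -((kp * ∏ j, css j ^ p j - km * ∏ j, css j ^ m j) *
          (∏ j, (c j / css j) ^ p j - ∏ j, (c j / css j) ^ m j)) := by
  have hx : ∀ j, 0 < c j / css j := fun j => div_pos (hc j) (hcss j)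
  have hP : ∏ j, (c j / css j) ^ p j ≠ 0 := (prod_pos fun j _ => pow_pos (hx j) _).ne'
  have hQ : ∏ j, (c j / css j) ^ m j ≠ 0 := (prod_pos fun j _ => pow_pos (hx j) _).ne'
  have hcss' : ∀ j, css j ≠ 0 := fun j => (hcss j).ne'
  rw [exp_neg, exp_sum_sub_mul_log_eq_prod_pow_div hx,
    prod_pow_eq_prod_pow_mul_prod_div_pow hcss' c p, prod_pow_eq_prod_pow_mul_prod_div_pow hcss' c m]
  field_simp
  ring

end Monomials

theorem complex_balance_solves_stationary_HJE_general
    {N M : ℕ} (νp νm : Fin M → Fin N → ℕ) (kp km : Fin M → ℝ)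
    (css : Fin N → ℝ) (hcss : ∀ j, 0 < css j)
    (hcb : ∀ c : Fin N → ℝ, (∀ j, 0 < c j) →
      ∑ i, (kp i * ∏ l, css l ^ νp i l - km i * ∏ l, css l ^ νm i l) *
        (∏ j, (c j / css j) ^ νp i j - ∏ j, (c j / css j) ^ νm i j) = 0) :
    ∀ c : Fin N → ℝ, (∀ j, 0 < c j) →
      ∑ i, ((kp i * ∏ l, c l ^ νp i l) *
          (Real.exp (∑ j, ((νm i j : ℝ) - (νp i j : ℝ)) * Real.log (c j / css j)) - 1)
        + (km i * ∏ l, c l ^ νm i l) *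
          (Real.exp (-∑ j, ((νm i j : ℝ) - (νp i j : ℝ)) * Real.log (c j / css j)) - 1))
        = 0 := by
  intro c hc
  simp only [reaction_hamiltonian_eq_neg_balance_term hcss hc, sum_neg_distrib, hcb c hc,
    neg_zero]

/-- **Complex balance yields an explicit solution of the stationary
Hamilton–Jacobi equation.**  For a mass-action network with rate functions
`R⁺_i(c) = kp i ∏_l c_l^{νp i l}`, `R⁻_i(c) = km i ∏_l c_l^{νm i l}`, suppose
`css > 0` is complex-balanced:
`Σ_i (R⁺_i(css) − R⁻_i(css)) [ ∏_j (c_j/css_j)^{νp i j} − ∏_j (c_j/css_j)^{νm i j} ] = 0`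
for every `c` in the open positive orthant.  Then
`φss(c) = Σ_j [ c_j ln(c_j/css_j) − c_j + css_j ]`, whose gradient is
`∂φss/∂c_j = ln(c_j/css_j)` so that `ν_i·∇φss(c) = Σ_j (νm i j − νp i j) ln(c_j/css_j)`,
satisfies the stationary Hamilton–Jacobi equation
`Σ_i [ R⁺_i(c)(e^{ν_i·∇φss(c)} − 1) + R⁻_i(c)(e^{−ν_i·∇φss(c)} − 1) ] = 0`
on the open positive orthant. -/
theorem complex_balance_solves_stationary_HJE
    {N M : ℕ} (νp νm : Fin M → Fin N → ℕ) (kp km : Fin M → ℝ)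
    (hkp : ∀ i, 0 < kp i) (hkm : ∀ i, 0 < km i)
    (css : Fin N → ℝ) (hcss : ∀ j, 0 < css j)
    (hcb : ∀ c : Fin N → ℝ, (∀ j, 0 < c j) →
      ∑ i, (kp i * ∏ l, css l ^ νp i l - km i * ∏ l, css l ^ νm i l) *
        (∏ j, (c j / css j) ^ νp i j - ∏ j, (c j / css j) ^ νm i j) = 0) :
    ∀ c : Fin N → ℝ, (∀ j, 0 < c j) →
      ∑ i, ((kp i * ∏ l, c l ^ νp i l) *
          (Real.exp (∑ j, ((νm i j : ℝ) - (νp i j : ℝ)) * Real.log (c j / css j)) - 1)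
        + (km i * ∏ l, c l ^ νm i l) *
          (Real.exp (-∑ j, ((νm i j : ℝ) - (νp i j : ℝ)) * Real.log (c j / css j)) - 1))
        = 0 :=
  complex_balance_solves_stationary_HJE_general νp νm kp km css hcss hcb
end

section
/- Let R_i^± (i = 1,…,M) be positive-valued rate functions on the open positive orthant of ℝ^N, and let φ^{ss} be a differentiable function satisfying the stationary Hamilton–Jacobi equation Σ_{i=1}^M [ R_i^+(c) ( exp(ν_i·∇φ^{ss}(c)) − 1 ) + R_i^-(c) ( exp(−ν_i·∇φ^{ss}(c)) − 1 ) ] = 0 at a point c of the open positive orthant. Then the macroscopic house-keeping energy input rate at c is nonnegative: Σ_{i=1}^M ( R_i^+(c) − R_i^-(c) ) ln[ ( R_i^+(c) / R_i^-(c) ) · exp( ν_i·∇φ^{ss}(c) ) ] ≥ 0. -/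
open Real

/- Each reaction contributes at least minus its Hamilton–Jacobi term: with
`r = (R⁺/R⁻) e^{ν·∇φ}` one has `R⁺ e^{ν·∇φ} = R⁻ r` and `R⁻ e^{-ν·∇φ} = R⁺ r⁻¹`, so the
difference of the two sides is `R⁻ (r - 1 - log r) + R⁺ (r⁻¹ - 1 + log r) ≥ 0`.
Summing over the reactions, the Hamilton–Jacobi terms add up to zero. -/

lemma neg_hamiltonian_term_le_sub_mul_log {p m : ℝ} (hp : 0 < p) (hm : 0 < m) (x : ℝ) :
    -(p * (exp x - 1) + m * (exp (-x) - 1)) ≤ (p - m) * log (p / m * exp x) := by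
  have hp_exp : p * exp x = m * (p / m * exp x) := by field_simp
  have hm_exp : m * exp (-x) = p * (p / m * exp x)⁻¹ := by rw [exp_neg]; field_simp
  have hr : 0 < p / m * exp x := by positivity
  generalize p / m * exp x = r at hp_exp hm_exp hr ⊢
  have hlog_le : log r ≤ r - 1 := log_le_sub_one_of_pos hr
  have hle_log : 1 - r⁻¹ ≤ log r := one_sub_inv_le_log_of_pos hr
  have hforward : 0 ≤ m * (r - 1 - log r) := mul_nonneg hm.le (by linarith)
  have hbackward : 0 ≤ p * (r⁻¹ - 1 + log r) := mul_nonneg hp.le (by linarith)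
  linear_combination hforward + hbackward - hp_exp - hm_exp

theorem macroscopic_housekeeping_rate_nonneg_general
    {N M : ℕ} (ν : Fin M → Fin N → ℤ)
    (Rp Rm : Fin M → (Fin N → ℝ) → ℝ)
    (c : Fin N → ℝ)
    (hRp : ∀ i, 0 < Rp i c) (hRm : ∀ i, 0 < Rm i c)
    (Dφ : (Fin N → ℝ) →L[ℝ] ℝ)
    (hHJE : ∑ i, (Rp i c * (Real.exp (Dφ fun j => (ν i j : ℝ)) - 1)
        + Rm i c * (Real.exp (-(Dφ fun j => (ν i j : ℝ))) - 1)) = 0) :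
    0 ≤ ∑ i, (Rp i c - Rm i c) *
        Real.log ((Rp i c / Rm i c) * Real.exp (Dφ fun j => (ν i j : ℝ))) := by
  calc (0 : ℝ)
      = ∑ i, -(Rp i c * (exp (Dφ fun j => (ν i j : ℝ)) - 1)
          + Rm i c * (exp (-(Dφ fun j => (ν i j : ℝ))) - 1)) := by
        rw [Finset.sum_neg_distrib, hHJE, neg_zero]
    _ ≤ _ := Finset.sum_le_sum fun i _ =>
        neg_hamiltonian_term_le_sub_mul_log (hRp i) (hRm i) _

/-- **Nonnegativity of the macroscopic house-keeping energy input rate.**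
Let `R⁺_i, R⁻_i` be rate functions that are positive at a point `c` of the open
positive orthant, and let `φss` be differentiable at `c` with derivative `Dφ`
satisfying the stationary Hamilton–Jacobi equation
`Σ_i [ R⁺_i(c)(e^{ν_i·∇φss(c)} − 1) + R⁻_i(c)(e^{−ν_i·∇φss(c)} − 1) ] = 0`.
Then the house-keeping energy input rate at `c` is nonnegative:
`Σ_i (R⁺_i(c) − R⁻_i(c)) ln[ (R⁺_i(c)/R⁻_i(c)) e^{ν_i·∇φss(c)} ] ≥ 0`. -/
theorem macroscopic_housekeeping_rate_nonneg
    {N M : ℕ} (ν : Fin M → Fin N → ℤ)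
    (Rp Rm : Fin M → (Fin N → ℝ) → ℝ)
    (c : Fin N → ℝ) (hc : ∀ j, 0 < c j)
    (hRp : ∀ i, 0 < Rp i c) (hRm : ∀ i, 0 < Rm i c)
    (φss : (Fin N → ℝ) → ℝ) (Dφ : (Fin N → ℝ) →L[ℝ] ℝ)
    (hφ : HasFDerivAt φss Dφ c)
    (hHJE : ∑ i, (Rp i c * (Real.exp (Dφ fun j => (ν i j : ℝ)) - 1)
        + Rm i c * (Real.exp (-(Dφ fun j => (ν i j : ℝ))) - 1)) = 0) :
    0 ≤ ∑ i, (Rp i c - Rm i c) *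
        Real.log ((Rp i c / Rm i c) * Real.exp (Dφ fun j => (ν i j : ℝ))) :=
  macroscopic_housekeeping_rate_nonneg_general ν Rp Rm c hRp hRm Dφ hHJE
end

section
/- (Vol'pert nonnegativity.) Consider a mass-action chemical reaction network with N species and M reversible reactions, so that the right-hand side of the chemical rate equations B_j(c) = Σ_{i=1}^M (ν⁻_{ij} − ν⁺_{ij}) [ k_i^+ ∏_{l=1}^N c_l^{ν⁺_{il}} − k_i^- ∏_{l=1}^N c_l^{ν⁻_{il}} ] is a polynomial vector field on ℝ^N. Let c : [0, T] → ℝ^N be a differentiable solution of dc_j/dt = B_j(c(t)) with componentwise nonnegative initial condition c_j(0) ≥ 0 for all j. Then c_j(t) ≥ 0 for all j = 1,…,N and all t ∈ [0, T]; i.e., mass-action systems do not admit negative solutions from nonnegative initial concentrations. -/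
/-!
The mass-action field `f` is quasipositive: on the face `{x ≥ 0, xⱼ = 0}` of the orthant its
`j`-th component is nonnegative. Being polynomial, `f` is Lipschitz on a ball containing the
trajectory, so comparing `f (c t)` with `f (c t)⁺` gives `-f (c t) j ≤ L ‖(c t)⁻‖`
whenever `c t j ≤ 0`. Hence the energy `φ t = ∑ⱼ ((c t j)⁻)²`, which is differentiable, satisfies
`φ' ≤ K φ` with `φ 0 = 0`, and Grönwall's inequality forces `φ = 0`.
-/

open Set Metric Filter Topology Asymptotics NNReal

lemma hasDerivAt_negPart_sq (x : ℝ) : HasDerivAt (fun y : ℝ => y⁻ ^ 2) (-2 * x⁻) x := by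
  rcases lt_trichotomy x 0 with hx | rfl | hx
  · have hsq : (fun y : ℝ => y⁻ ^ 2) =ᶠ[𝓝 x] fun y => y ^ 2 :=
      (eventually_lt_nhds hx).mono fun y hy => by simp only [negPart_eq_neg.2 hy.le, neg_sq]
    refine ((hasDerivAt_pow 2 x).congr_of_eventuallyEq hsq).congr_deriv ?_
    rw [negPart_eq_neg.2 hx.le]
    ring
  · have hle : ∀ y : ℝ, ‖y⁻ ^ 2‖ ≤ 1 * ‖y ^ 2‖ := fun y => by
      rw [one_mul, norm_pow, norm_pow, Real.norm_of_nonneg (negPart_nonneg y)]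
      exact pow_le_pow_left₀ (negPart_nonneg y) (max_le (neg_le_abs y) (abs_nonneg y)) 2
    rw [hasDerivAt_iff_isLittleO_nhds_zero]
    simpa using (IsBigO.of_bound 1 (Eventually.of_forall hle)).trans_isLittleO
      (isLittleO_pow_id one_lt_two)
  · have hzero : (fun y : ℝ => y⁻ ^ 2) =ᶠ[𝓝 x] fun _ => 0 :=
      (eventually_gt_nhds hx).mono fun y hy => by simp [negPart_eq_zero.2 hy.le]
    refine ((hasDerivAt_const x (0 : ℝ)).congr_of_eventuallyEq hzero).congr_deriv ?_
    simp [negPart_eq_zero.2 hx.le]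

section Orthant

variable {ι : Type*} [Fintype ι]

lemma norm_posPart_le_norm (x : ι → ℝ) : ‖x⁺‖ ≤ ‖x‖ :=
  (pi_norm_le_iff_of_nonneg (norm_nonneg x)).2 fun j =>
    calc ‖(x j)⁺‖ = (x j)⁺ := Real.norm_of_nonneg (posPart_nonneg _)
      _ ≤ ‖x j‖ := max_le (le_abs_self _) (abs_nonneg _)
      _ ≤ ‖x‖ := norm_le_pi_norm x j

lemma sq_norm_le_sum_sq (x : ι → ℝ) : ‖x‖ ^ 2 ≤ ∑ j, x j ^ 2 := by
  have hsum : 0 ≤ ∑ j, x j ^ 2 := Finset.sum_nonneg fun j _ => sq_nonneg _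
  refine (Real.le_sqrt (norm_nonneg x) hsum).1
    ((pi_norm_le_iff_of_nonneg (Real.sqrt_nonneg _)).2 fun j => Real.abs_le_sqrt ?_)
  exact Finset.single_le_sum (f := fun j => x j ^ 2) (fun j _ => sq_nonneg _) (Finset.mem_univ j)

def IsQuasipositive (f : (ι → ℝ) → ι → ℝ) : Prop :=
  ∀ x, 0 ≤ x → ∀ j, x j = 0 → 0 ≤ f x j

variable {f : (ι → ℝ) → ι → ℝ} {s : Set (ι → ℝ)} {L : ℝ≥0} {x : ι → ℝ}

lemma IsQuasipositive.neg_mul_norm_negPart_le_apply (hf : IsQuasipositive f)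
    (hL : LipschitzOnWith L f s) (hx : x ∈ s) (hx' : x⁺ ∈ s) {j : ι} (hj : x j ≤ 0) :
    -(L * ‖x⁻‖) ≤ f x j := by
  have hpos : 0 ≤ f x⁺ j := hf _ (posPart_nonneg x) j (by simpa using hj)
  have hdist : |f x j - f x⁺ j| ≤ L * ‖x⁻‖ :=
    calc |f x j - f x⁺ j| ≤ ‖f x - f x⁺‖ := norm_le_pi_norm (f x - f x⁺) j
      _ ≤ L * ‖x - x⁺‖ := hL.norm_sub_le hx hx'
      _ = L * ‖x⁻‖ := by
        rw [← norm_neg (x - x⁺), neg_sub]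
        nth_rewrite 2 [← posPart_sub_negPart x]
        rw [sub_sub_cancel]
  linarith [neg_abs_le (f x j - f x⁺ j)]

lemma IsQuasipositive.sum_negPart_mul_apply_le (hf : IsQuasipositive f)
    (hL : LipschitzOnWith L f s) (hx : x ∈ s) (hx' : x⁺ ∈ s) :
    ∑ j, -2 * (x j)⁻ * f x j ≤ 2 * L * Fintype.card ι * ∑ j, (x j)⁻ ^ 2 := by
  have hterm : ∀ j, -2 * (x j)⁻ * f x j ≤ 2 * L * ‖x⁻‖ ^ 2 := by
    intro j
    rcases le_total (x j) 0 with hj | hj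
    · have hle : (x j)⁻ ≤ ‖x⁻‖ := (le_abs_self _).trans (norm_le_pi_norm x⁻ j)
      have hfx := hf.neg_mul_norm_negPart_le_apply hL hx hx' hj
      nlinarith [mul_nonneg (negPart_nonneg (x j)) (neg_le_iff_add_nonneg.1 hfx),
        mul_nonneg L.coe_nonneg (mul_nonneg (sub_nonneg.2 hle) (norm_nonneg x⁻))]
    · rw [negPart_eq_zero.2 hj, mul_zero, zero_mul]
      positivity
  calc ∑ j, -2 * (x j)⁻ * f x j ≤ ∑ _j : ι, 2 * L * ‖x⁻‖ ^ 2 :=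
        Finset.sum_le_sum fun j _ => hterm j
    _ = 2 * L * Fintype.card ι * ‖x⁻‖ ^ 2 := by
      rw [Finset.sum_const, Finset.card_univ, nsmul_eq_mul]
      ring
    _ ≤ 2 * L * Fintype.card ι * ∑ j, (x j)⁻ ^ 2 := by
      gcongr
      exact sq_norm_le_sum_sq x⁻

theorem IsQuasipositive.nonneg_of_hasDerivAt (hf : IsQuasipositive f) (hlip : LocallyLipschitz f)
    {T : ℝ} {c : ℝ → ι → ℝ}
    (hc : ∀ t ∈ Icc 0 T, ∀ j, HasDerivAt (fun u => c u j) (f (c t) j) t) (h0 : 0 ≤ c 0) :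
    ∀ t ∈ Icc 0 T, 0 ≤ c t := by
  have hcont : ContinuousOn c (Icc 0 T) :=
    continuousOn_pi.2 fun j t ht => (hc t ht j).continuousAt.continuousWithinAt
  obtain ⟨R, hR⟩ := isCompact_Icc.exists_bound_of_continuousOn hcont
  obtain ⟨L, hL⟩ :=
    hlip.locallyLipschitzOn.exists_lipschitzOnWith_of_compact (isCompact_closedBall 0 R)
  set φ : ℝ → ℝ := fun t => ∑ j, (c t j)⁻ ^ 2
  have hφ : ∀ t ∈ Icc 0 T, HasDerivAt φ (∑ j, -2 * (c t j)⁻ * f (c t) j) t := fun t ht =>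
    HasDerivAt.fun_sum fun j _ => (hasDerivAt_negPart_sq _).comp t (hc t ht j)
  have hφ0 : φ 0 ≤ 0 := by simp [φ, negPart_eq_zero.2 (h0 _)]
  have hbound : ∀ t ∈ Ico 0 T,
      ∑ j, -2 * (c t j)⁻ * f (c t) j ≤ 2 * L * Fintype.card ι * φ t + 0 := fun t ht => by
    have hball : ‖c t‖ ≤ R := hR t (Ico_subset_Icc_self ht)
    rw [add_zero]
    exact hf.sum_negPart_mul_apply_le hL (mem_closedBall_zero_iff.2 hball)
      (mem_closedBall_zero_iff.2 ((norm_posPart_le_norm _).trans hball))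
  have hφle : ∀ t ∈ Icc 0 T, φ t ≤ 0 := fun t ht => by
    simpa only [gronwallBound_ε0_δ0] using le_gronwallBound_of_liminf_deriv_right_le
      (fun s hs => (hφ s hs).continuousAt.continuousWithinAt)
      (fun s hs r hr => (hφ s (Ico_subset_Icc_self hs)).hasDerivWithinAt.liminf_right_slope_le hr)
      hφ0 hbound t ht
  intro t ht j
  have hsq : (c t j)⁻ ^ 2 ≤ 0 :=
    (Finset.single_le_sum (f := fun j => (c t j)⁻ ^ 2) (fun j _ => sq_nonneg _)
      (Finset.mem_univ j)).trans (hφle t ht)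
  exact negPart_eq_zero.1 (pow_eq_zero_iff two_ne_zero |>.1 (le_antisymm hsq (sq_nonneg _)))

end Orthant

section MassAction

variable {ι κ : Type*} [Fintype ι] [Fintype κ]

def massActionField (νp νm : κ → ι → ℕ) (kp km : κ → ℝ) (x : ι → ℝ) : ι → ℝ := fun j =>
  ∑ i, ((νm i j : ℝ) - νp i j) * (kp i * ∏ l, x l ^ νp i l - km i * ∏ l, x l ^ νm i l)

lemma contDiff_massActionField (νp νm : κ → ι → ℕ) (kp km : κ → ℝ) {n : WithTop ℕ∞} :
    ContDiff ℝ n (massActionField νp νm kp km) :=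
  contDiff_pi.2 fun j => by unfold massActionField; fun_prop

lemma natCast_mul_prod_pow_eq_zero {x : ι → ℝ} {j : ι} (hj : x j = 0) (a : ι → ℕ) :
    (a j : ℝ) * ∏ l, x l ^ a l = 0 := by
  rcases (a j).eq_zero_or_pos with ha | ha
  · simp [ha]
  · rw [Finset.prod_eq_zero (Finset.mem_univ j) (by simp [hj, ha.ne']), mul_zero]

-- A reaction consuming species `j` has rate zero when `x j = 0`, so it cannot decrease `x j`.
lemma isQuasipositive_massActionField (νp νm : κ → ι → ℕ) {kp km : κ → ℝ}
    (hkp : ∀ i, 0 ≤ kp i) (hkm : ∀ i, 0 ≤ km i) :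
    IsQuasipositive (massActionField νp νm kp km) := by
  intro x hx j hj
  refine Finset.sum_nonneg fun i _ => ?_
  have hprod : ∀ a : ι → ℕ, 0 ≤ ∏ l, x l ^ a l := fun a =>
    Finset.prod_nonneg fun l _ => pow_nonneg (hx l) _
  calc 0 ≤ νm i j * (kp i * ∏ l, x l ^ νp i l) + νp i j * (km i * ∏ l, x l ^ νm i l) :=
        add_nonneg (mul_nonneg (Nat.cast_nonneg _) (mul_nonneg (hkp i) (hprod _)))
          (mul_nonneg (Nat.cast_nonneg _) (mul_nonneg (hkm i) (hprod _)))
    _ = _ := by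
      linear_combination km i * natCast_mul_prod_pow_eq_zero hj (νm i) +
        kp i * natCast_mul_prod_pow_eq_zero hj (νp i)

end MassAction

theorem mass_action_solutions_nonneg_general
    {N M : ℕ} (νp νm : Fin M → Fin N → ℕ) (kp km : Fin M → ℝ)
    (hkp : ∀ i, 0 < kp i) (hkm : ∀ i, 0 < km i)
    (T : ℝ)
    (c : ℝ → Fin N → ℝ)
    (hcderiv : ∀ t ∈ Set.Icc (0 : ℝ) T, ∀ j,
      HasDerivAt (fun u => c u j)
        (∑ i, ((νm i j : ℝ) - (νp i j : ℝ)) *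
          (kp i * ∏ l, c t l ^ νp i l - km i * ∏ l, c t l ^ νm i l)) t)
    (hinit : ∀ j, 0 ≤ c 0 j) :
    ∀ t ∈ Set.Icc (0 : ℝ) T, ∀ j, 0 ≤ c t j :=
  have hquasi :=
    isQuasipositive_massActionField νp νm (fun i => (hkp i).le) (fun i => (hkm i).le)
  hquasi.nonneg_of_hasDerivAt (contDiff_massActionField νp νm kp km).locallyLipschitz
    hcderiv hinit

/-- **Vol'pert's nonnegativity theorem for mass-action kinetics.**
For a mass-action network the right-hand side of the rate equations,
`B_j(c) = Σ_i (νm i j − νp i j) [ kp i ∏_l c_l^{νp i l} − km i ∏_l c_l^{νm i l} ]`,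
is a polynomial vector field on `ℝ^N`.  Any differentiable solution
`c : [0,T] → ℝ^N` of `dc_j/dt = B_j(c(t))` with componentwise nonnegative
initial condition stays componentwise nonnegative on `[0,T]`. -/
theorem mass_action_solutions_nonneg
    {N M : ℕ} (νp νm : Fin M → Fin N → ℕ) (kp km : Fin M → ℝ)
    (hkp : ∀ i, 0 < kp i) (hkm : ∀ i, 0 < km i)
    (T : ℝ) (hT : 0 ≤ T)
    (c : ℝ → Fin N → ℝ)
    (hcderiv : ∀ t ∈ Set.Icc (0 : ℝ) T, ∀ j,
      HasDerivAt (fun u => c u j)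
        (∑ i, ((νm i j : ℝ) - (νp i j : ℝ)) *
          (kp i * ∏ l, c t l ^ νp i l - km i * ∏ l, c t l ^ νm i l)) t)
    (hinit : ∀ j, 0 ≤ c 0 j) :
    ∀ t ∈ Set.Icc (0 : ℝ) T, ∀ j, 0 ≤ c t j :=
  mass_action_solutions_nonneg_general νp νm kp km hkp hkm T c hcderiv hinit
end
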